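/- arXiv:2202.05562 — 4 statements merged into one kernel-verified Lean document; each statement's English description precedes it below -/
import Mathlib

section
/- Let G be a finite simple graph not isomorphic to K4, and let c be an edge-colouring of G under which every perfect matching of G is monochromatic; assume G has at least one perfect matching. Then exactly two colour classes of c contain a perfect matching if and only if G has a Hamiltonian cycle with alternating colours, i.e. a Hamiltonian cycle whose edge set is the disjoint union of two monochromatic perfect matchings of distinct colours. -/
/-- A perfect matching of `G`: a set of edges of `G` such that every vertex
lies in exactly one edge of the set. -/
def IsPerfectMatching {V : Type*} (G : SimpleGraph V) (M : Set (Sym2 V)) : Prop :=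
  M ⊆ G.edgeSet ∧ ∀ v : V, ∃! e : Sym2 V, e ∈ M ∧ v ∈ e

/-- `c` is a PMValid `k`-edge-colouring of `G`: it colours the edges of `G` with colours
in `{1, …, k}`, every perfect matching of `G` is monochromatic under `c`, and every
colour class contains a perfect matching. -/
def PMValid {V : Type*} (G : SimpleGraph V) (c : Sym2 V → ℕ) (k : ℕ) : Prop :=
  (∀ e ∈ G.edgeSet, c e ∈ Finset.Icc 1 k) ∧
  (∀ M : Set (Sym2 V), IsPerfectMatching G M → ∀ e ∈ M, ∀ e' ∈ M, c e = c e') ∧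
  (∀ i ∈ Finset.Icc 1 k, ∃ M : Set (Sym2 V), IsPerfectMatching G M ∧ ∀ e ∈ M, c e = i)

namespace PMAux

variable {V : Type*} {G : SimpleGraph V} {M N O M₃ : Set (Sym2 V)}

lemma pm_eq (hM : IsPerfectMatching G M) {v : V} {e e' : Sym2 V}
    (he : e ∈ M) (he' : e' ∈ M) (hv : v ∈ e) (hv' : v ∈ e') : e = e' := by
  obtain ⟨e₀, _, hu⟩ := hM.2 v
  rw [hu e ⟨he, hv⟩, hu e' ⟨he', hv'⟩]

lemma pm_ne (hM : IsPerfectMatching G M) {v w : V} (h : s(v, w) ∈ M) : v ≠ w := by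
  intro hvw
  exact G.loopless.irrefl w (by simpa [hvw] using hM.1 h)

lemma pm_partner (hM : IsPerfectMatching G M) (v : V) : ∃ w, s(v, w) ∈ M := by
  obtain ⟨e, ⟨heM, hev⟩, _⟩ := hM.2 v
  induction e with
  | h a b =>
    rcases Sym2.mem_iff.1 hev with rfl | rfl
    · exact ⟨b, heM⟩
    · exact ⟨a, by rwa [Sym2.eq_swap]⟩

lemma pm_partner_unique (hM : IsPerfectMatching G M) {v w w' : V}
    (h : s(v, w) ∈ M) (h' : s(v, w') ∈ M) : w = w' := by
  have := pm_eq hM h h' (Sym2.mem_mk_left v w) (Sym2.mem_mk_left v w')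
  rcases Sym2.eq_iff.1 this with ⟨_, h2⟩ | ⟨h1, h2⟩
  · exact h2
  · exact h2.trans h1

/-- The cyclic alternating structure: `f` enumerates the vertices of a Hamiltonian
cycle of period `n` whose edges alternate between `N` (even positions) and `O`. -/
structure CycData (G : SimpleGraph V) (N O : Set (Sym2 V)) (n : ℕ) (f : ℕ → V) : Prop where
  hn : 2 ≤ n
  hev : n % 2 = 0
  hper : ∀ m, f (m + n) = f m
  hinj : ∀ a, a < n → ∀ b, b < n → f a = f b → a = b
  hsurj : ∀ v, ∃ a, a < n ∧ f a = v
  hN : ∀ a, a % 2 = 0 → s(f a, f (a + 1)) ∈ N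
  hO : ∀ a, a % 2 = 1 → s(f a, f (a + 1)) ∈ O
  hNO : ∀ e ∈ N, e ∉ O

namespace CycData

variable {n : ℕ} {f : ℕ → V}

lemma hper' (h : CycData G N O n f) : ∀ q m, f (m + q * n) = f m := by
  intro q
  induction q with
  | zero => simp
  | succ q ih =>
    intro m
    have : m + (q + 1) * n = (m + n) + q * n := by ring
    rw [this, ih, h.hper]

lemma f_mod (h : CycData G N O n f) (m : ℕ) : f (m % n) = f m := by
  conv_rhs => rw [← Nat.mod_add_div' m n]
  rw [← h.hper' (m / n) (m % n)]

lemma f_congr (h : CycData G N O n f) {a b : ℕ} (hab : a % n = b % n) : f a = f b := by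
  rw [← h.f_mod a, ← h.f_mod b, hab]

lemma f_inj' (h : CycData G N O n f) {a b : ℕ} (hab : f a = f b) : a % n = b % n := by
  have h0 : 0 < n := lt_of_lt_of_le two_pos h.hn
  exact h.hinj _ (Nat.mod_lt _ h0) _ (Nat.mod_lt _ h0) (by rw [h.f_mod, h.f_mod]; exact hab)

lemma cyc_edge (h : CycData G N O n f) (a : ℕ) : s(f a, f (a + 1)) ∈ N ∪ O := by
  rcases Nat.even_or_odd a with ha | ha
  · exact Or.inl (h.hN a (Nat.even_iff.1 ha))
  · exact Or.inr (h.hO a (Nat.odd_iff.1 ha))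

lemma four_le (h : CycData G N O n f) : 4 ≤ n := by
  have h2 := h.hn
  have he := h.hev
  rcases Nat.lt_or_ge n 4 with h4 | h4
  · exfalso
    have hn2 : n = 2 := by omega
    have h1 : s(f 1, f 2) ∈ O := h.hO 1 rfl
    have hf2 : f 2 = f 0 := by rw [show (2:ℕ) = 0 + n by omega, h.hper]
    have h3 : s(f 0, f 1) ∈ N := h.hN 0 rfl
    exact h.hNO _ h3 (by rw [hf2, Sym2.eq_swap] at h1; exact h1)
  · exact h4

lemma rot_inj (h : CycData G N O n f) (r : ℕ) :
    ∀ a, a < n → ∀ b, b < n → f (a + r) = f (b + r) → a = b := by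
  intro a ha b hb hfab
  have h1 : (a + r) % n = (b + r) % n := h.f_inj' hfab
  have : a % n = b % n := Nat.ModEq.add_right_cancel' r (h1 : (a + r) ≡ (b + r) [MOD n])
  rwa [Nat.mod_eq_of_lt ha, Nat.mod_eq_of_lt hb] at this

lemma rot_surj (h : CycData G N O n f) (r : ℕ) :
    ∀ v, ∃ a, a < n ∧ f (a + r) = v := by
  intro v
  obtain ⟨a, ha, rfl⟩ := h.hsurj v
  have h0 : 0 < n := by have := h.hn; omega
  refine ⟨(a + r * n - r) % n, Nat.mod_lt _ h0, ?_⟩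
  apply h.f_congr
  have hrn : r ≤ r * n := Nat.le_mul_of_pos_right r h0
  calc ((a + r * n - r) % n + r) % n = ((a + r * n - r) + r) % n :=
        Nat.ModEq.add_right r (Nat.mod_modEq _ n)
    _ = (a + r * n) % n := by rw [Nat.sub_add_cancel (by omega)]
    _ = a % n := by simp [Nat.add_mul_mod_self_right]

lemma rot_per (h : CycData G N O n f) (r : ℕ) :
    ∀ m, f (m + n + r) = f (m + r) := by
  intro m
  rw [show m + n + r = (m + r) + n by ring, h.hper]

/-- rotation by an even offset -/
lemma rot_even (h : CycData G N O n f) (r : ℕ) (hr : r % 2 = 0) :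
    CycData G N O n (fun m => f (m + r)) where
  hn := h.hn
  hev := h.hev
  hper := h.rot_per r
  hinj := h.rot_inj r
  hsurj := h.rot_surj r
  hN := fun a ha => by
    show s(f (a + r), f (a + 1 + r)) ∈ N
    rw [show a + 1 + r = (a + r) + 1 by ring]
    exact h.hN (a + r) (by omega)
  hO := fun a ha => by
    show s(f (a + r), f (a + 1 + r)) ∈ O
    rw [show a + 1 + r = (a + r) + 1 by ring]
    exact h.hO (a + r) (by omega)
  hNO := h.hNO

/-- rotation by an odd offset swaps the two matchings -/
lemma rot_odd (h : CycData G N O n f) (r : ℕ) (hr : r % 2 = 1) (hNO' : ∀ e ∈ O, e ∉ N) :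
    CycData G O N n (fun m => f (m + r)) where
  hn := h.hn
  hev := h.hev
  hper := h.rot_per r
  hinj := h.rot_inj r
  hsurj := h.rot_surj r
  hN := fun a ha => by
    show s(f (a + r), f (a + 1 + r)) ∈ O
    rw [show a + 1 + r = (a + r) + 1 by ring]
    exact h.hO (a + r) (by omega)
  hO := fun a ha => by
    show s(f (a + r), f (a + 1 + r)) ∈ N
    rw [show a + 1 + r = (a + r) + 1 by ring]
    exact h.hN (a + r) (by omega)
  hNO := hNO'

end CycData
end PMAux

namespace PMAux

variable {V : Type*} {G : SimpleGraph V} {M N O M₃ : Set (Sym2 V)}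

/-- the alternating sequence: step by `p1` from even positions, by `p2` from odd ones. -/
def gseq (p1 p2 : V → V) (v0 : V) : ℕ → V
  | 0 => v0
  | (m + 1) => if m % 2 = 0 then p1 (gseq p1 p2 v0 m) else p2 (gseq p1 p2 v0 m)

section gseq

variable {p1 p2 : V → V} {v0 : V}
local notation "g" => gseq p1 p2 v0

lemma gseq_even {m : ℕ} (hm : m % 2 = 0) : g (m + 1) = p1 (g m) := by
  simp [gseq, hm]

lemma gseq_odd {m : ℕ} (hm : m % 2 = 1) : g (m + 1) = p2 (g m) := by
  simp [gseq, hm]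

variable (hi1 : ∀ v, p1 (p1 v) = v) (hi2 : ∀ v, p2 (p2 v) = v)

include hi1 hi2

lemma gseq_back_even {m : ℕ} (hm : m % 2 = 0) : p1 (g (m + 1)) = g m := by
  rw [gseq_even hm, hi1]

lemma gseq_back_odd {m : ℕ} (hm : m % 2 = 1) : p2 (g (m + 1)) = g m := by
  rw [gseq_odd hm, hi2]

omit hi1 hi2

lemma gseq_shift {a b : ℕ} (hpar : a % 2 = b % 2) (hab : g a = g b) :
    ∀ t, g (a + t) = g (b + t) := by
  intro t
  induction t with
  | zero => simpa
  | succ t ih =>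
    rw [show a + (t+1) = (a+t) + 1 by ring, show b + (t+1) = (b+t) + 1 by ring]
    rcases Nat.even_or_odd (a + t) with hp | hp
    · have hp' : (a + t) % 2 = 0 := Nat.even_iff.1 hp
      rw [gseq_even hp', gseq_even (by omega), ih]
    · have hp' : (a + t) % 2 = 1 := Nat.odd_iff.1 hp
      rw [gseq_odd hp', gseq_odd (by omega), ih]

include hi1 hi2

lemma gseq_back {a b : ℕ} (hpar : a % 2 = b % 2) (hab : g (a + 1) = g (b + 1)) :
    g a = g b := by
  rcases Nat.even_or_odd a with hp | hp
  · have hp' : a % 2 = 0 := Nat.even_iff.1 hp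
    rw [← gseq_back_even hi1 hi2 hp', ← gseq_back_even hi1 hi2 (show b % 2 = 0 by omega), hab]
  · have hp' : a % 2 = 1 := Nat.odd_iff.1 hp
    rw [← gseq_back_odd hi1 hi2 hp', ← gseq_back_odd hi1 hi2 (show b % 2 = 1 by omega), hab]

variable (hne1 : ∀ v, p1 v ≠ v) (hne2 : ∀ v, p2 v ≠ v)
include hne1 hne2

lemma gseq_parity {a b : ℕ} (hab : g a = g b) : a % 2 = b % 2 := by
  by_contra hpar
  -- wlog a ≤ b
  wlog hle : a ≤ b generalizing a b
  · exact this hab.symm (fun h => hpar h.symm) (by omega)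
  -- palindrome
  have hpal : ∀ t, t ≤ b - a → g (a + t) = g (b - t) := by
    intro t
    induction t with
    | zero => intro _; simpa using hab
    | succ t ih =>
      intro ht
      have h1 : g (a + t) = g (b - t) := ih (by omega)
      rcases Nat.even_or_odd (a + t) with hp | hp
      · have hp' : (a + t) % 2 = 0 := Nat.even_iff.1 hp
        have hq : (b - t) % 2 = 1 := by omega
        have hbt : b - t = (b - (t+1)) + 1 := by omega
        have hq2 : (b - (t+1)) % 2 = 0 := by omega
        rw [show a + (t+1) = (a + t) + 1 by ring, gseq_even hp']
        rw [h1, hbt, gseq_even hq2, hi1]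
      · have hp' : (a + t) % 2 = 1 := Nat.odd_iff.1 hp
        have hbt : b - t = (b - (t+1)) + 1 := by omega
        have hq2 : (b - (t+1)) % 2 = 1 := by omega
        rw [show a + (t+1) = (a + t) + 1 by ring, gseq_odd hp']
        rw [h1, hbt, gseq_odd hq2, hi2]
  have hd : (b - a) % 2 = 1 := by omega
  set t0 := (b - a - 1) / 2 with ht0
  have h1 : g (a + t0) = g (b - t0) := hpal t0 (by omega)
  have h2 : b - t0 = (a + t0) + 1 := by omega
  rw [h2] at h1
  rcases Nat.even_or_odd (a + t0) with hp | hp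
  · have hp' : (a + t0) % 2 = 0 := Nat.even_iff.1 hp
    rw [gseq_even hp'] at h1
    exact hne1 _ h1.symm
  · have hp' : (a + t0) % 2 = 1 := Nat.odd_iff.1 hp
    rw [gseq_odd hp'] at h1
    exact hne2 _ h1.symm

lemma gseq_back_iter {a b : ℕ} (hpar : a % 2 = b % 2) (hab : g a = g b) :
    ∀ u, u ≤ a → g (a - u) = g (b + a - u - a) ∨ True := by
  exact fun u _ => Or.inr trivial

end gseq

end PMAux
namespace PMAux

variable {V : Type*} {G : SimpleGraph V} {N O : Set (Sym2 V)}

lemma exists_cyc [Fintype V] [Nonempty V]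
    (h1 : IsPerfectMatching G N) (h2 : IsPerfectMatching G O)
    (hdisj : ∀ e ∈ N, e ∉ O)
    (hmix : ∀ M, IsPerfectMatching G M → (∃ e ∈ M, e ∈ N) → (∃ e ∈ M, e ∈ O) → False) :
    ∃ (n : ℕ) (fseq : ℕ → V), CycData G N O n fseq := by
  classical
  choose p1 hp1 using pm_partner h1
  choose p2 hp2 using pm_partner h2
  have hi1 : ∀ v, p1 (p1 v) = v := fun v =>
    pm_partner_unique h1 (hp1 (p1 v)) (by rw [Sym2.eq_swap]; exact hp1 v)
  have hi2 : ∀ v, p2 (p2 v) = v := fun v =>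
    pm_partner_unique h2 (hp2 (p2 v)) (by rw [Sym2.eq_swap]; exact hp2 v)
  have hne1 : ∀ v, p1 v ≠ v := fun v => (pm_ne h1 (hp1 v)).symm
  have hne2 : ∀ v, p2 v ≠ v := fun v => (pm_ne h2 (hp2 v)).symm
  set v0 : V := Classical.arbitrary V with hv0
  set g : ℕ → V := gseq p1 p2 v0 with hg
  -- backward propagation of coincidences to 0
  have hback0 : ∀ a b : ℕ, a ≤ b → a % 2 = b % 2 → g a = g b → g 0 = g (b - a) := by
    intro a b hle hpar hab
    have key : ∀ u, u ≤ a → g (a - u) = g (b - u) := by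
      intro u
      induction u with
      | zero => intro _; simpa using hab
      | succ u ih =>
        intro hu
        have h1' : g (a - u) = g (b - u) := ih (by omega)
        have e1 : a - u = (a - (u+1)) + 1 := by omega
        have e2 : b - u = (b - (u+1)) + 1 := by omega
        rw [e1, e2] at h1'
        exact gseq_back hi1 hi2 (by omega) h1'
    have := key a le_rfl
    simpa using this
  -- existence of a return time
  have hR : ∃ d, 0 < d ∧ g d = g 0 := by
    obtain ⟨a, b, hab, hgab⟩ := Finite.exists_ne_map_eq_of_infinite g
    rcases Nat.lt_or_ge a b with h | h
    · have hpar := gseq_parity hi1 hi2 hne1 hne2 hgab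
      exact ⟨b - a, by omega, (hback0 a b (by omega) hpar hgab).symm⟩
    · have hlt : b < a := by omega
      have hpar := gseq_parity hi1 hi2 hne1 hne2 hgab.symm
      exact ⟨a - b, by omega, (hback0 b a (by omega) hpar hgab.symm).symm⟩
  set d0 := Nat.find hR with hd0def
  obtain ⟨hd0pos, hd0ret⟩ : 0 < d0 ∧ g d0 = g 0 := Nat.find_spec hR
  have heven : d0 % 2 = 0 := by
    have := gseq_parity hi1 hi2 hne1 hne2 hd0ret
    simpa using this
  have hper0 : ∀ t, g (t + d0) = g t := by
    intro t
    have := gseq_shift (a := d0) (b := 0) (by omega) hd0ret t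
    simpa [Nat.add_comm] using this
  have hperq : ∀ q m, g (m + q * d0) = g m := by
    intro q
    induction q with
    | zero => simp
    | succ q ih =>
      intro m
      rw [show m + (q+1) * d0 = (m + d0) + q * d0 by ring, ih, hper0]
  have hmodg : ∀ m, g (m % d0) = g m := by
    intro m
    conv_rhs => rw [← Nat.mod_add_div' m d0]
    rw [← hperq (m / d0) (m % d0)]
  have hinj0 : ∀ a, a < d0 → ∀ b, b < d0 → g a = g b → a = b := by
    intro a ha b hb hab
    by_contra hne
    rcases Nat.lt_or_ge a b with h | h
    · have hpar := gseq_parity hi1 hi2 hne1 hne2 hab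
      have := (hback0 a b (by omega) hpar hab).symm
      exact Nat.find_min hR (show b - a < d0 by omega) ⟨by omega, this⟩
    · have hlt : b < a := by omega
      have hpar := gseq_parity hi1 hi2 hne1 hne2 hab.symm
      have := (hback0 b a (by omega) hpar hab.symm).symm
      exact Nat.find_min hR (show a - b < d0 by omega) ⟨by omega, this⟩
  -- the orbit
  set S : Set V := Set.range g with hS
  have hS1 : ∀ v ∈ S, p1 v ∈ S := by
    rintro v ⟨m, rfl⟩
    rcases Nat.even_or_odd m with hm | hm
    · exact ⟨m + 1, gseq_even (Nat.even_iff.1 hm)⟩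
    · have hm' : m % 2 = 1 := Nat.odd_iff.1 hm
      have h1' : m = (m - 1) + 1 := by omega
      refine ⟨m - 1, ?_⟩
      conv_rhs => rw [h1']
      rw [gseq_back_even hi1 hi2 (by omega)]
  have hS2 : ∀ v ∈ S, p2 v ∈ S := by
    rintro v ⟨m, rfl⟩
    rcases Nat.even_or_odd m with hm | hm
    · have hm' : m % 2 = 0 := Nat.even_iff.1 hm
      refine ⟨m + d0 - 1, ?_⟩
      have h1' : m + d0 = (m + d0 - 1) + 1 := by omega
      have heq : gseq p1 p2 v0 m = g (m + d0) := (hper0 m).symm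
      show g (m + d0 - 1) = p2 (gseq p1 p2 v0 m)
      rw [heq]
      conv_rhs => rw [h1']
      rw [gseq_back_odd hi1 hi2 (by omega)]
    · exact ⟨m + 1, gseq_odd (Nat.odd_iff.1 hm)⟩
  have hS1' : ∀ v, v ∉ S → p1 v ∉ S := by
    intro v hv hc
    exact hv (by rw [← hi1 v]; exact hS1 _ hc)
  have hS2' : ∀ v, v ∉ S → p2 v ∉ S := by
    intro v hv hc
    exact hv (by rw [← hi2 v]; exact hS2 _ hc)
  -- the orbit is everything
  have hSuniv : ∀ v, v ∈ S := by
    by_contra hc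
    push_neg at hc
    obtain ⟨u, hu⟩ := hc
    set Mw : Set (Sym2 V) :=
      {e | (e ∈ O ∧ ∃ w, w ∈ e ∧ w ∈ S) ∨ (e ∈ N ∧ ∃ w, w ∈ e ∧ w ∉ S)} with hMw
    have hMwPM : IsPerfectMatching G Mw := by
      constructor
      · rintro e (⟨he, _⟩ | ⟨he, _⟩)
        · exact h2.1 he
        · exact h1.1 he
      · intro v
        by_cases hv : v ∈ S
        · refine ⟨s(v, p2 v), ⟨Or.inl ⟨hp2 v, v, Sym2.mem_mk_left _ _, hv⟩,
            Sym2.mem_mk_left _ _⟩, ?_⟩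
          rintro y ⟨(⟨hyO, _⟩ | ⟨hyN, w, hwy, hwS⟩), hvy⟩
          · exact pm_eq h2 hyO (hp2 v) hvy (Sym2.mem_mk_left _ _)
          · exfalso
            have hy' : y = s(v, p1 v) := pm_eq h1 hyN (hp1 v) hvy (Sym2.mem_mk_left _ _)
            rw [hy'] at hwy
            rcases Sym2.mem_iff.1 hwy with rfl | rfl
            · exact hwS hv
            · exact hwS (hS1 _ hv)
        · refine ⟨s(v, p1 v), ⟨Or.inr ⟨hp1 v, v, Sym2.mem_mk_left _ _, hv⟩,
            Sym2.mem_mk_left _ _⟩, ?_⟩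
          rintro y ⟨(⟨hyO, w, hwy, hwS⟩ | ⟨hyN, _⟩), hvy⟩
          · exfalso
            have hy' : y = s(v, p2 v) := pm_eq h2 hyO (hp2 v) hvy (Sym2.mem_mk_left _ _)
            rw [hy'] at hwy
            rcases Sym2.mem_iff.1 hwy with rfl | rfl
            · exact hv hwS
            · exact hS2' _ hv hwS
          · exact pm_eq h1 hyN (hp1 v) hvy (Sym2.mem_mk_left _ _)
    refine hmix Mw hMwPM ⟨s(u, p1 u), Or.inr ⟨hp1 u, u, Sym2.mem_mk_left _ _, hu⟩, hp1 u⟩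
      ⟨s(v0, p2 v0), Or.inl ⟨hp2 v0, v0, Sym2.mem_mk_left _ _, ⟨0, rfl⟩⟩, hp2 v0⟩
  -- assemble
  refine ⟨d0, g, ?_⟩
  constructor
  · omega
  · exact heven
  · exact hper0
  · exact hinj0
  · intro v
    obtain ⟨m, rfl⟩ := hSuniv v
    exact ⟨m % d0, Nat.mod_lt _ hd0pos, hmodg m⟩
  · intro a ha
    show s(gseq p1 p2 v0 a, gseq p1 p2 v0 (a + 1)) ∈ N
    rw [gseq_even ha]
    exact hp1 _
  · intro a ha
    show s(gseq p1 p2 v0 a, gseq p1 p2 v0 (a + 1)) ∈ O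
    rw [gseq_odd ha]
    exact hp2 _
  · exact hdisj

end PMAux
namespace PMAux

variable {V : Type*} {G : SimpleGraph V} {N O : Set (Sym2 V)}

/-- the path `f m, f (m-1), ..., f 0` -/
def pathW (G : SimpleGraph V) (f : ℕ → V) (hadj : ∀ m, G.Adj (f (m + 1)) (f m)) :
    (m : ℕ) → G.Walk (f m) (f 0)
  | 0 => SimpleGraph.Walk.nil
  | (m + 1) => SimpleGraph.Walk.cons (hadj m) (pathW G f hadj m)

lemma pathW_support (f : ℕ → V) (hadj : ∀ m, G.Adj (f (m + 1)) (f m)) (m : ℕ) :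
    (pathW G f hadj m).support = (List.range (m + 1)).reverse.map f := by
  induction m with
  | zero => simp [pathW, List.range_succ]
  | succ m ih =>
    rw [pathW, SimpleGraph.Walk.support_cons, ih]
    simp [List.range_succ]

lemma pathW_edges (f : ℕ → V) (hadj : ∀ m, G.Adj (f (m + 1)) (f m)) (m : ℕ) :
    (pathW G f hadj m).edges = (List.range m).reverse.map (fun a => s(f (a + 1), f a)) := by
  induction m with
  | zero => simp [pathW]
  | succ m ih =>
    rw [pathW, SimpleGraph.Walk.edges_cons, ih]
    simp [List.range_succ]

lemma cyc_walk [DecidableEq V] {n : ℕ} {f : ℕ → V} (hcd : CycData G N O n f)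
    (h1 : IsPerfectMatching G N) (h2 : IsPerfectMatching G O) :
    ∃ (v : V) (p : G.Walk v v), p.IsHamiltonianCycle ∧
      ∀ e : Sym2 V, e ∈ p.edges ↔ e ∈ N ∪ O := by
  have h4 := hcd.four_le
  have hevn := hcd.hev
  have hadj : ∀ m, G.Adj (f (m + 1)) (f m) := by
    intro m
    have := hcd.cyc_edge m
    have : s(f m, f (m + 1)) ∈ G.edgeSet := by
      rcases this with h | h
      · exact h1.1 h
      · exact h2.1 h
    exact (G.mem_edgeSet.1 this).symm
  have hadj0 : G.Adj (f 0) (f (n - 1)) := by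
    have := hadj (n - 1)
    rw [show n - 1 + 1 = 0 + n by omega, hcd.hper] at this
    exact this
  set q : G.Walk (f 0) (f 0) := SimpleGraph.Walk.cons hadj0 (pathW G f hadj (n - 1)) with hq
  have hsup : q.support = f 0 :: (List.range n).reverse.map f := by
    rw [hq, SimpleGraph.Walk.support_cons, pathW_support, show n - 1 + 1 = n by omega]
  have hidx : ∀ a, a < n → ∀ b, b < n → f a = f b → a = b := hcd.hinj
  have hedges : q.edges =
      s(f 0, f (n - 1)) :: (List.range (n - 1)).reverse.map (fun a => s(f (a + 1), f a)) := by
    rw [hq, SimpleGraph.Walk.edges_cons, pathW_edges]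
  -- every cyclic edge is in the walk's edges
  have hmem_edges : ∀ a, a < n → s(f a, f (a + 1)) ∈ q.edges := by
    intro a ha
    rw [hedges]
    rcases Nat.lt_or_ge a (n - 1) with h | h
    · refine List.mem_cons_of_mem _ ?_
      simp only [List.mem_map, List.mem_reverse, List.mem_range]
      exact ⟨a, h, Sym2.eq_swap⟩
    · have ha' : a = n - 1 := by omega
      subst ha'
      have : f (n - 1 + 1) = f 0 := by rw [show n - 1 + 1 = 0 + n by omega, hcd.hper]
      rw [this, Sym2.eq_swap]
      exact List.mem_cons_self
  -- edges ↔ N ∪ O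
  have hiff : ∀ e : Sym2 V, e ∈ q.edges ↔ e ∈ N ∪ O := by
    intro e
    constructor
    · intro he
      rw [hedges] at he
      rcases List.mem_cons.1 he with rfl | he
      · have : f 0 = f (n - 1 + 1) := by rw [show n - 1 + 1 = 0 + n by omega, hcd.hper]
        rw [this, Sym2.eq_swap]
        exact hcd.cyc_edge (n - 1)
      · simp only [List.mem_map, List.mem_reverse, List.mem_range] at he
        obtain ⟨a, _, rfl⟩ := he
        rw [Sym2.eq_swap]
        exact hcd.cyc_edge a
    · intro he
      -- characterize edges of N and O
      induction e with
      | h v w =>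
        obtain ⟨a, ha, rfl⟩ := hcd.hsurj v
        rcases he with he | he
        · rcases Nat.even_or_odd a with hp | hp
          · have h0 := hcd.hN a (Nat.even_iff.1 hp)
            have := pm_eq h1 he h0 (Sym2.mem_mk_left _ _) (Sym2.mem_mk_left _ _)
            rw [this]; exact hmem_edges a ha
          · have hp' : a % 2 = 1 := Nat.odd_iff.1 hp
            have h0 := hcd.hN (a - 1) (by omega)
            rw [show a - 1 + 1 = a by omega] at h0
            have := pm_eq h1 he h0 (Sym2.mem_mk_left _ _) (Sym2.mem_mk_right _ _)
            rw [this, show a = (a-1) + 1 by omega]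
            exact hmem_edges (a - 1) (by omega)
        · rcases Nat.even_or_odd a with hp | hp
          · have hp' : a % 2 = 0 := Nat.even_iff.1 hp
            rcases Nat.eq_zero_or_pos a with rfl | hpos
            · have h0 := hcd.hO (n - 1) (by omega)
              rw [show n - 1 + 1 = 0 + n by omega, hcd.hper] at h0
              have heq := pm_eq h2 he h0 (Sym2.mem_mk_left _ _) (Sym2.mem_mk_right _ _)
              have hme := hmem_edges (n - 1) (by omega)
              rw [show n - 1 + 1 = 0 + n by omega, hcd.hper] at hme
              rw [heq]
              exact hme
            · have h0 := hcd.hO (a - 1) (by omega)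
              rw [show a - 1 + 1 = a by omega] at h0
              have := pm_eq h2 he h0 (Sym2.mem_mk_left _ _) (Sym2.mem_mk_right _ _)
              rw [this, show a = (a-1) + 1 by omega]
              exact hmem_edges (a - 1) (by omega)
          · have h0 := hcd.hO a (Nat.odd_iff.1 hp)
            have := pm_eq h2 he h0 (Sym2.mem_mk_left _ _) (Sym2.mem_mk_left _ _)
            rw [this]; exact hmem_edges a ha
  -- Nodup of tail support
  have htail : q.support.tail = (List.range n).reverse.map f := by rw [hsup]; rfl
  have hnodup_tail : q.support.tail.Nodup := by
    rw [htail]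
    refine List.Nodup.map_on ?_ (by simp [List.nodup_range])
    intro x hx y hy hxy
    simp only [List.mem_reverse, List.mem_range] at hx hy
    exact hidx x hx y hy hxy
  have hcyc : q.IsCycle := by
    rw [SimpleGraph.Walk.isCycle_def]
    refine ⟨?_, by simp [hq], hnodup_tail⟩
    rw [SimpleGraph.Walk.isTrail_def, hedges]
    refine List.Nodup.cons ?_ ?_
    · simp only [List.mem_map, List.mem_reverse, List.mem_range]
      rintro ⟨a, ha, hae⟩
      rcases Sym2.eq_iff.1 hae with ⟨e1, e2⟩ | ⟨e1, e2⟩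
      · have := hidx (a + 1) (by omega) 0 (by omega) e1
        omega
      · have h1' := hidx (a + 1) (by omega) (n - 1) (by omega) e1
        have h2' := hidx a (by omega) 0 (by omega) e2
        omega
    · refine List.Nodup.map_on ?_ (by simp [List.nodup_range])
      intro x hx y hy hxy
      simp only [List.mem_reverse, List.mem_range] at hx hy
      rcases Sym2.eq_iff.1 hxy with ⟨e1, e2⟩ | ⟨e1, e2⟩
      · exact hidx x (by omega) y (by omega) e2
      · have h1' := hidx (x + 1) (by omega) y (by omega) e1
        have h2' := hidx x (by omega) (y + 1) (by omega) e2
        omega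
  refine ⟨f 0, q, ?_, hiff⟩
  rw [SimpleGraph.Walk.isHamiltonianCycle_iff_isCycle_and_support_count_tail_eq_one]
  refine ⟨hcyc, ?_⟩
  intro v
  rw [htail]
  apply List.count_eq_one_of_mem
  · refine List.Nodup.map_on ?_ (by simp [List.nodup_range])
    intro x hx y hy hxy
    simp only [List.mem_reverse, List.mem_range] at hx hy
    exact hidx x hx y hy hxy
  · obtain ⟨a, ha, rfl⟩ := hcd.hsurj v
    simp only [List.mem_map, List.mem_reverse, List.mem_range]
    exact ⟨a, ha, rfl⟩

end PMAux
namespace PMAux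

variable {V : Type*} {G : SimpleGraph V} {N O M₃ : Set (Sym2 V)}

lemma constr1 {n k : ℕ} {f : ℕ → V} (hcd : CycData G N O n f)
    (h1 : IsPerfectMatching G N) (h2 : IsPerfectMatching G O) (h3 : IsPerfectMatching G M₃)
    (hk2 : 2 ≤ k) (hkn : k ≤ n - 2) (hkodd : k % 2 = 1)
    (hch : s(f 0, f k) ∈ M₃) :
    ∃ M, IsPerfectMatching G M ∧ (∃ e ∈ M, e ∈ M₃) ∧ ∃ e ∈ M, e ∈ N ∪ O := by
  have h4 := hcd.four_le
  have hevn := hcd.hev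
  have hfi : ∀ x y : ℕ, x < n → y < n → f x = f y → x = y :=
    fun x y hx hy h => hcd.hinj x hx y hy h
  refine ⟨{e | e = s(f 0, f k) ∨
      (∃ a, a % 2 = 1 ∧ a < k ∧ e = s(f a, f (a + 1))) ∨
      (∃ a, a % 2 = 0 ∧ k < a ∧ a < n ∧ e = s(f a, f (a + 1)))}, ⟨?_, ?_⟩,
    ⟨s(f 0, f k), Or.inl rfl, hch⟩,
    ⟨s(f 1, f (1 + 1)), Or.inr (Or.inl ⟨1, rfl, by omega, rfl⟩), hcd.cyc_edge 1⟩⟩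
  · rintro e (rfl | ⟨b, hb1, hb2, rfl⟩ | ⟨b, hb1, hb2, hb3, rfl⟩)
    · exact h3.1 hch
    · exact h2.1 (hcd.hO b hb1)
    · exact h1.1 (hcd.hN b hb1)
  · intro v
    obtain ⟨t, ht, rfl⟩ := hcd.hsurj v
    have hsplit : (t = 0 ∨ t = k) ∨ (t % 2 = 1 ∧ t < k) ∨ (t % 2 = 0 ∧ 2 ≤ t ∧ t < k) ∨
        (t % 2 = 0 ∧ k < t) ∨ (t % 2 = 1 ∧ k < t) := by omega
    rcases hsplit with hpos | ⟨hq1, hq2⟩ | ⟨hq1, hq2, hq3⟩ | ⟨hq1, hq2⟩ | ⟨hq1, hq2⟩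
    · -- chord position
      have hv0 : f t ∈ s(f 0, f k) := by
        rcases hpos with rfl | rfl
        · exact Sym2.mem_mk_left _ _
        · exact Sym2.mem_mk_right _ _
      refine ⟨s(f 0, f k), ⟨Or.inl rfl, hv0⟩, ?_⟩
      rintro y ⟨(rfl | ⟨b, hb1, hb2, rfl⟩ | ⟨b, hb1, hb2, hb3, rfl⟩), hvy⟩
      · rfl
      · exfalso; rcases Sym2.mem_iff.1 hvy with h | h
        · have := hfi t b ht (by omega) h; omega
        · have := hfi t (b + 1) ht (by omega) h; omega
      · exfalso; rcases Sym2.mem_iff.1 hvy with h | h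
        · have := hfi t b ht (by omega) h; omega
        · have := hfi t (b + 1) ht (by omega) h; omega
    · -- t odd, t < k
      have he₀ : s(f t, f (t + 1)) ∈ O := hcd.hO t hq1
      refine ⟨s(f t, f (t + 1)), ⟨Or.inr (Or.inl ⟨t, hq1, hq2, rfl⟩), Sym2.mem_mk_left _ _⟩, ?_⟩
      rintro y ⟨(rfl | ⟨b, hb1, hb2, rfl⟩ | ⟨b, hb1, hb2, hb3, rfl⟩), hvy⟩
      · exfalso; rcases Sym2.mem_iff.1 hvy with h | h
        · have := hfi t 0 ht (by omega) h; omega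
        · have := hfi t k ht (by omega) h; omega
      · exact pm_eq h2 (hcd.hO b hb1) he₀ hvy (Sym2.mem_mk_left _ _)
      · exfalso; rcases Sym2.mem_iff.1 hvy with h | h
        · have := hfi t b ht (by omega) h; omega
        · have := hfi t (b + 1) ht (by omega) h; omega
    · -- t even, 2 ≤ t < k
      have hm1 : t - 1 + 1 = t := by omega
      have he₀ : s(f (t - 1), f t) ∈ O := by
        have := hcd.hO (t - 1) (by omega); rwa [hm1] at this
      refine ⟨s(f (t - 1), f t), ⟨Or.inr (Or.inl ⟨t - 1, by omega, by omega, by rw [hm1]⟩),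
        Sym2.mem_mk_right _ _⟩, ?_⟩
      rintro y ⟨(rfl | ⟨b, hb1, hb2, rfl⟩ | ⟨b, hb1, hb2, hb3, rfl⟩), hvy⟩
      · exfalso; rcases Sym2.mem_iff.1 hvy with h | h
        · have := hfi t 0 ht (by omega) h; omega
        · have := hfi t k ht (by omega) h; omega
      · exact pm_eq h2 (hcd.hO b hb1) he₀ hvy (Sym2.mem_mk_right _ _)
      · exfalso; rcases Sym2.mem_iff.1 hvy with h | h
        · have := hfi t b ht (by omega) h; omega
        · have := hfi t (b + 1) ht (by omega) h; omega
    · -- t even, k < t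
      have he₀ : s(f t, f (t + 1)) ∈ N := hcd.hN t hq1
      refine ⟨s(f t, f (t + 1)), ⟨Or.inr (Or.inr ⟨t, hq1, hq2, ht, rfl⟩),
        Sym2.mem_mk_left _ _⟩, ?_⟩
      rintro y ⟨(rfl | ⟨b, hb1, hb2, rfl⟩ | ⟨b, hb1, hb2, hb3, rfl⟩), hvy⟩
      · exfalso; rcases Sym2.mem_iff.1 hvy with h | h
        · have := hfi t 0 ht (by omega) h; omega
        · have := hfi t k ht (by omega) h; omega
      · exfalso; rcases Sym2.mem_iff.1 hvy with h | h
        · have := hfi t b ht (by omega) h; omega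
        · have := hfi t (b + 1) ht (by omega) h; omega
      · exact pm_eq h1 (hcd.hN b hb1) he₀ hvy (Sym2.mem_mk_left _ _)
    · -- t odd, k < t
      have hm1 : t - 1 + 1 = t := by omega
      have he₀ : s(f (t - 1), f t) ∈ N := by
        have := hcd.hN (t - 1) (by omega); rwa [hm1] at this
      refine ⟨s(f (t - 1), f t), ⟨Or.inr (Or.inr ⟨t - 1, by omega, by omega, by omega,
        by rw [hm1]⟩), Sym2.mem_mk_right _ _⟩, ?_⟩
      rintro y ⟨(rfl | ⟨b, hb1, hb2, rfl⟩ | ⟨b, hb1, hb2, hb3, rfl⟩), hvy⟩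
      · exfalso; rcases Sym2.mem_iff.1 hvy with h | h
        · have := hfi t 0 ht (by omega) h; omega
        · have := hfi t k ht (by omega) h; omega
      · exfalso; rcases Sym2.mem_iff.1 hvy with h | h
        · have := hfi t b ht (by omega) h; omega
        · have := hfi t (b + 1) ht (by omega) h; omega
      · exact pm_eq h1 (hcd.hN b hb1) he₀ hvy (Sym2.mem_mk_right _ _)

end PMAux
namespace PMAux

variable {V : Type*} {G : SimpleGraph V} {N O M₃ : Set (Sym2 V)}

lemma constr2 {n k m : ℕ} {f : ℕ → V} (hcd : CycData G N O n f)
    (h1 : IsPerfectMatching G N) (h2 : IsPerfectMatching G O) (h3 : IsPerfectMatching G M₃)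
    (hk2 : 2 ≤ k) (hkev : k % 2 = 0) (hmodd : m % 2 = 1) (hkm : k + 1 ≤ m) (hmn : m ≤ n - 1)
    (hn6 : 6 ≤ n)
    (hch1 : s(f 0, f k) ∈ M₃) (hch2 : s(f 1, f m) ∈ M₃) :
    ∃ M, IsPerfectMatching G M ∧ (∃ e ∈ M, e ∈ M₃) ∧ ∃ e ∈ M, e ∈ N ∪ O := by
  have hevn := hcd.hev
  have hfi : ∀ x y : ℕ, x < n → y < n → f x = f y → x = y :=
    fun x y hx hy h => hcd.hinj x hx y hy h
  refine ⟨{e | e = s(f 0, f k) ∨ e = s(f 1, f m) ∨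
      (∃ a, a % 2 = 0 ∧ 2 ≤ a ∧ a < k ∧ e = s(f a, f (a + 1))) ∨
      (∃ a, a % 2 = 1 ∧ k < a ∧ a < m ∧ e = s(f a, f (a + 1))) ∨
      (∃ a, a % 2 = 0 ∧ m < a ∧ a < n ∧ e = s(f a, f (a + 1)))}, ⟨?_, ?_⟩,
    ⟨s(f 0, f k), Or.inl rfl, hch1⟩, ?_⟩
  · rintro e (rfl | rfl | ⟨b, hb1, hb2, hb3, rfl⟩ | ⟨b, hb1, hb2, hb3, rfl⟩ |
      ⟨b, hb1, hb2, hb3, rfl⟩)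
    · exact h3.1 hch1
    · exact h3.1 hch2
    · exact h1.1 (hcd.hN b hb1)
    · exact h2.1 (hcd.hO b hb1)
    · exact h1.1 (hcd.hN b hb1)
  · intro v
    obtain ⟨t, ht, rfl⟩ := hcd.hsurj v
    have hsplit : (t = 0 ∨ t = k) ∨ (t = 1 ∨ t = m) ∨
        (t % 2 = 0 ∧ 2 ≤ t ∧ t < k) ∨ (t % 2 = 1 ∧ 3 ≤ t ∧ t < k) ∨
        (t % 2 = 1 ∧ k < t ∧ t < m) ∨ (t % 2 = 0 ∧ k < t ∧ t < m) ∨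
        (t % 2 = 0 ∧ m < t ∧ t < n) ∨ (t % 2 = 1 ∧ m < t ∧ t < n) := by omega
    rcases hsplit with hpos | hpos | ⟨hq1, hq2, hq3⟩ | ⟨hq1, hq2, hq3⟩ | ⟨hq1, hq2, hq3⟩ |
      ⟨hq1, hq2, hq3⟩ | ⟨hq1, hq2, hq3⟩ | ⟨hq1, hq2, hq3⟩
    · -- chord1 position
      have hv0 : f t ∈ s(f 0, f k) := by
        rcases hpos with rfl | rfl
        · exact Sym2.mem_mk_left _ _
        · exact Sym2.mem_mk_right _ _
      refine ⟨s(f 0, f k), ⟨Or.inl rfl, hv0⟩, ?_⟩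
      rintro y ⟨(rfl | rfl | ⟨b, hb1, hb2, hb3, rfl⟩ | ⟨b, hb1, hb2, hb3, rfl⟩ |
        ⟨b, hb1, hb2, hb3, rfl⟩), hvy⟩
      · rfl
      · exact pm_eq h3 hch2 hch1 hvy hv0
      · exfalso; rcases Sym2.mem_iff.1 hvy with h | h
        · have := hfi t b ht (by omega) h; omega
        · have := hfi t (b + 1) ht (by omega) h; omega
      · exfalso; rcases Sym2.mem_iff.1 hvy with h | h
        · have := hfi t b ht (by omega) h; omega
        · have := hfi t (b + 1) ht (by omega) h; omega
      · exfalso; rcases Sym2.mem_iff.1 hvy with h | h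
        · have := hfi t b ht (by omega) h; omega
        · have := hfi t (b + 1) ht (by omega) h; omega
    · -- chord2 position
      have hv0 : f t ∈ s(f 1, f m) := by
        rcases hpos with rfl | rfl
        · exact Sym2.mem_mk_left _ _
        · exact Sym2.mem_mk_right _ _
      refine ⟨s(f 1, f m), ⟨Or.inr (Or.inl rfl), hv0⟩, ?_⟩
      rintro y ⟨(rfl | rfl | ⟨b, hb1, hb2, hb3, rfl⟩ | ⟨b, hb1, hb2, hb3, rfl⟩ |
        ⟨b, hb1, hb2, hb3, rfl⟩), hvy⟩
      · exact pm_eq h3 hch1 hch2 hvy hv0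
      · rfl
      · exfalso; rcases Sym2.mem_iff.1 hvy with h | h
        · have := hfi t b ht (by omega) h; omega
        · have := hfi t (b + 1) ht (by omega) h; omega
      · exfalso; rcases Sym2.mem_iff.1 hvy with h | h
        · have := hfi t b ht (by omega) h; omega
        · have := hfi t (b + 1) ht (by omega) h; omega
      · exfalso; rcases Sym2.mem_iff.1 hvy with h | h
        · have := hfi t b ht (by omega) h; omega
        · have := hfi t (b + 1) ht (by omega) h; omega
    · -- seg1, t even
      have he₀ : s(f t, f (t + 1)) ∈ N := hcd.hN t hq1
      refine ⟨s(f t, f (t + 1)), ⟨Or.inr (Or.inr (Or.inl ⟨t, hq1, hq2, hq3, rfl⟩)),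
        Sym2.mem_mk_left _ _⟩, ?_⟩
      rintro y ⟨(rfl | rfl | ⟨b, hb1, hb2, hb3, rfl⟩ | ⟨b, hb1, hb2, hb3, rfl⟩ |
        ⟨b, hb1, hb2, hb3, rfl⟩), hvy⟩
      · exfalso; rcases Sym2.mem_iff.1 hvy with h | h
        · have := hfi t 0 ht (by omega) h; omega
        · have := hfi t k ht (by omega) h; omega
      · exfalso; rcases Sym2.mem_iff.1 hvy with h | h
        · have := hfi t 1 ht (by omega) h; omega
        · have := hfi t m ht (by omega) h; omega
      · exact pm_eq h1 (hcd.hN b hb1) he₀ hvy (Sym2.mem_mk_left _ _)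
      · exfalso; rcases Sym2.mem_iff.1 hvy with h | h
        · have := hfi t b ht (by omega) h; omega
        · have := hfi t (b + 1) ht (by omega) h; omega
      · exact pm_eq h1 (hcd.hN b hb1) he₀ hvy (Sym2.mem_mk_left _ _)
    · -- seg1, t odd
      have hm1 : t - 1 + 1 = t := by omega
      have he₀ : s(f (t - 1), f t) ∈ N := by
        have := hcd.hN (t - 1) (by omega); rwa [hm1] at this
      refine ⟨s(f (t - 1), f t), ⟨Or.inr (Or.inr (Or.inl ⟨t - 1, by omega, by omega, by omega,
        by rw [hm1]⟩)), Sym2.mem_mk_right _ _⟩, ?_⟩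
      rintro y ⟨(rfl | rfl | ⟨b, hb1, hb2, hb3, rfl⟩ | ⟨b, hb1, hb2, hb3, rfl⟩ |
        ⟨b, hb1, hb2, hb3, rfl⟩), hvy⟩
      · exfalso; rcases Sym2.mem_iff.1 hvy with h | h
        · have := hfi t 0 ht (by omega) h; omega
        · have := hfi t k ht (by omega) h; omega
      · exfalso; rcases Sym2.mem_iff.1 hvy with h | h
        · have := hfi t 1 ht (by omega) h; omega
        · have := hfi t m ht (by omega) h; omega
      · exact pm_eq h1 (hcd.hN b hb1) he₀ hvy (Sym2.mem_mk_right _ _)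
      · exfalso; rcases Sym2.mem_iff.1 hvy with h | h
        · have := hfi t b ht (by omega) h; omega
        · have := hfi t (b + 1) ht (by omega) h; omega
      · exact pm_eq h1 (hcd.hN b hb1) he₀ hvy (Sym2.mem_mk_right _ _)
    · -- seg2, t odd
      have he₀ : s(f t, f (t + 1)) ∈ O := hcd.hO t hq1
      refine ⟨s(f t, f (t + 1)), ⟨Or.inr (Or.inr (Or.inr (Or.inl ⟨t, hq1, hq2, hq3, rfl⟩))),
        Sym2.mem_mk_left _ _⟩, ?_⟩
      rintro y ⟨(rfl | rfl | ⟨b, hb1, hb2, hb3, rfl⟩ | ⟨b, hb1, hb2, hb3, rfl⟩ |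
        ⟨b, hb1, hb2, hb3, rfl⟩), hvy⟩
      · exfalso; rcases Sym2.mem_iff.1 hvy with h | h
        · have := hfi t 0 ht (by omega) h; omega
        · have := hfi t k ht (by omega) h; omega
      · exfalso; rcases Sym2.mem_iff.1 hvy with h | h
        · have := hfi t 1 ht (by omega) h; omega
        · have := hfi t m ht (by omega) h; omega
      · exfalso; rcases Sym2.mem_iff.1 hvy with h | h
        · have := hfi t b ht (by omega) h; omega
        · have := hfi t (b + 1) ht (by omega) h; omega
      · exact pm_eq h2 (hcd.hO b hb1) he₀ hvy (Sym2.mem_mk_left _ _)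
      · exfalso; rcases Sym2.mem_iff.1 hvy with h | h
        · have := hfi t b ht (by omega) h; omega
        · have := hfi t (b + 1) ht (by omega) h; omega
    · -- seg2, t even
      have hm1 : t - 1 + 1 = t := by omega
      have he₀ : s(f (t - 1), f t) ∈ O := by
        have := hcd.hO (t - 1) (by omega); rwa [hm1] at this
      refine ⟨s(f (t - 1), f t), ⟨Or.inr (Or.inr (Or.inr (Or.inl ⟨t - 1, by omega, by omega,
        by omega, by rw [hm1]⟩))), Sym2.mem_mk_right _ _⟩, ?_⟩
      rintro y ⟨(rfl | rfl | ⟨b, hb1, hb2, hb3, rfl⟩ | ⟨b, hb1, hb2, hb3, rfl⟩ |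
        ⟨b, hb1, hb2, hb3, rfl⟩), hvy⟩
      · exfalso; rcases Sym2.mem_iff.1 hvy with h | h
        · have := hfi t 0 ht (by omega) h; omega
        · have := hfi t k ht (by omega) h; omega
      · exfalso; rcases Sym2.mem_iff.1 hvy with h | h
        · have := hfi t 1 ht (by omega) h; omega
        · have := hfi t m ht (by omega) h; omega
      · exfalso; rcases Sym2.mem_iff.1 hvy with h | h
        · have := hfi t b ht (by omega) h; omega
        · have := hfi t (b + 1) ht (by omega) h; omega
      · exact pm_eq h2 (hcd.hO b hb1) he₀ hvy (Sym2.mem_mk_right _ _)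
      · exfalso; rcases Sym2.mem_iff.1 hvy with h | h
        · have := hfi t b ht (by omega) h; omega
        · have := hfi t (b + 1) ht (by omega) h; omega
    · -- seg3, t even
      have he₀ : s(f t, f (t + 1)) ∈ N := hcd.hN t hq1
      refine ⟨s(f t, f (t + 1)), ⟨Or.inr (Or.inr (Or.inr (Or.inr ⟨t, hq1, hq2, hq3, rfl⟩))),
        Sym2.mem_mk_left _ _⟩, ?_⟩
      rintro y ⟨(rfl | rfl | ⟨b, hb1, hb2, hb3, rfl⟩ | ⟨b, hb1, hb2, hb3, rfl⟩ |
        ⟨b, hb1, hb2, hb3, rfl⟩), hvy⟩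
      · exfalso; rcases Sym2.mem_iff.1 hvy with h | h
        · have := hfi t 0 ht (by omega) h; omega
        · have := hfi t k ht (by omega) h; omega
      · exfalso; rcases Sym2.mem_iff.1 hvy with h | h
        · have := hfi t 1 ht (by omega) h; omega
        · have := hfi t m ht (by omega) h; omega
      · exact pm_eq h1 (hcd.hN b hb1) he₀ hvy (Sym2.mem_mk_left _ _)
      · exfalso; rcases Sym2.mem_iff.1 hvy with h | h
        · have := hfi t b ht (by omega) h; omega
        · have := hfi t (b + 1) ht (by omega) h; omega
      · exact pm_eq h1 (hcd.hN b hb1) he₀ hvy (Sym2.mem_mk_left _ _)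
    · -- seg3, t odd
      have hm1 : t - 1 + 1 = t := by omega
      have he₀ : s(f (t - 1), f t) ∈ N := by
        have := hcd.hN (t - 1) (by omega); rwa [hm1] at this
      refine ⟨s(f (t - 1), f t), ⟨Or.inr (Or.inr (Or.inr (Or.inr ⟨t - 1, by omega, by omega,
        by omega, by rw [hm1]⟩))), Sym2.mem_mk_right _ _⟩, ?_⟩
      rintro y ⟨(rfl | rfl | ⟨b, hb1, hb2, hb3, rfl⟩ | ⟨b, hb1, hb2, hb3, rfl⟩ |
        ⟨b, hb1, hb2, hb3, rfl⟩), hvy⟩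
      · exfalso; rcases Sym2.mem_iff.1 hvy with h | h
        · have := hfi t 0 ht (by omega) h; omega
        · have := hfi t k ht (by omega) h; omega
      · exfalso; rcases Sym2.mem_iff.1 hvy with h | h
        · have := hfi t 1 ht (by omega) h; omega
        · have := hfi t m ht (by omega) h; omega
      · exfalso; rcases Sym2.mem_iff.1 hvy with h | h
        · have := hfi t b ht (by omega) h; omega
        · have := hfi t (b + 1) ht (by omega) h; omega
      · exfalso; rcases Sym2.mem_iff.1 hvy with h | h
        · have := hfi t b ht (by omega) h; omega
        · have := hfi t (b + 1) ht (by omega) h; omega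
      · exact pm_eq h1 (hcd.hN b hb1) he₀ hvy (Sym2.mem_mk_right _ _)
  · -- some cycle edge is in M
    rcases show 4 ≤ k ∨ (k = 2 ∧ 5 ≤ m) ∨ (k = 2 ∧ m = 3) by omega with h | ⟨rfl, h⟩ | ⟨rfl, rfl⟩
    · exact ⟨s(f 2, f (2 + 1)), Or.inr (Or.inr (Or.inl ⟨2, rfl, le_rfl, by omega, rfl⟩)),
        hcd.cyc_edge 2⟩
    · exact ⟨s(f 3, f (3 + 1)), Or.inr (Or.inr (Or.inr (Or.inl ⟨3, rfl, by omega, by omega, rfl⟩))),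
        hcd.cyc_edge 3⟩
    · exact ⟨s(f 4, f (4 + 1)), Or.inr (Or.inr (Or.inr (Or.inr ⟨4, rfl, by omega, by omega, rfl⟩))),
        hcd.cyc_edge 4⟩

end PMAux
namespace PMAux

variable {V : Type*} {G : SimpleGraph V} {N O M₃ : Set (Sym2 V)}

lemma k4_iso [DecidableEq V] {f : ℕ → V} (hcd : CycData G N O 4 f)
    (h1 : IsPerfectMatching G N) (h2 : IsPerfectMatching G O)
    (hc1 : s(f 0, f 2) ∈ G.edgeSet) (hc2 : s(f 1, f 3) ∈ G.edgeSet) :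
    Nonempty (G ≃g (⊤ : SimpleGraph (Fin 4))) := by
  have hedge : ∀ a : ℕ, s(f a, f (a + 1)) ∈ G.edgeSet := by
    intro a
    rcases hcd.cyc_edge a with h | h
    · exact h1.1 h
    · exact h2.1 h
  have hadj : ∀ a b : ℕ, a < 4 → b < 4 → a ≠ b → G.Adj (f a) (f b) := by
    have h01 : G.Adj (f 0) (f 1) := G.mem_edgeSet.1 (hedge 0)
    have h12 : G.Adj (f 1) (f 2) := G.mem_edgeSet.1 (hedge 1)
    have h23 : G.Adj (f 2) (f 3) := G.mem_edgeSet.1 (hedge 2)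
    have h30 : G.Adj (f 3) (f 0) := by
      have := G.mem_edgeSet.1 (hedge 3)
      rwa [show (3:ℕ) + 1 = 0 + 4 by omega, hcd.hper] at this
    have h02 : G.Adj (f 0) (f 2) := G.mem_edgeSet.1 hc1
    have h13 : G.Adj (f 1) (f 3) := G.mem_edgeSet.1 hc2
    intro a b ha hb hab
    interval_cases a <;> interval_cases b <;>
      first
        | omega
        | exact h01 | exact h12 | exact h23 | exact h30 | exact h02 | exact h13
        | exact h01.symm | exact h12.symm | exact h23.symm | exact h30.symm
        | exact h02.symm | exact h13.symm
  have hinj4 : Function.Injective (fun x : Fin 4 => f x.val) := by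
    intro x y hxy
    exact Fin.ext (hcd.hinj x.val x.isLt y.val y.isLt hxy)
  have hsurj4 : Function.Surjective (fun x : Fin 4 => f x.val) := by
    intro v
    obtain ⟨a, ha, rfl⟩ := hcd.hsurj v
    exact ⟨⟨a, ha⟩, rfl⟩
  have hADJ : ∀ a b : V, a ≠ b ↔ G.Adj a b := by
    intro a b
    constructor
    · intro hne
      obtain ⟨x, hx, rfl⟩ := hcd.hsurj a
      obtain ⟨y, hy, rfl⟩ := hcd.hsurj b
      exact hadj x y hx hy (fun h => hne (by rw [h]))
    · exact fun h => G.ne_of_adj h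
  set eqv : Fin 4 ≃ V := Equiv.ofBijective _ ⟨hinj4, hsurj4⟩ with heqv
  refine ⟨⟨eqv.symm, ?_⟩⟩
  intro a b
  rw [SimpleGraph.top_adj]
  constructor
  · intro h
    exact (hADJ a b).1 (fun hab => h (congrArg eqv.symm hab))
  · intro h hc
    exact G.ne_of_adj h (eqv.symm.injective hc)

lemma chord_exists {n : ℕ} {f : ℕ → V} (hcd : CycData G N O n f)
    (h3 : IsPerfectMatching G M₃) (hd : ∀ e ∈ M₃, e ∉ N ∪ O) (a : ℕ) :
    ∃ k, 2 ≤ k ∧ k ≤ n - 2 ∧ s(f a, f (a + k)) ∈ M₃ := by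
  have h4 := hcd.four_le
  have hpos : 0 < n := by omega
  obtain ⟨w, hw⟩ := pm_partner h3 (f a)
  obtain ⟨b, hb, rfl⟩ := hcd.hsurj w
  set k := (b + n - a % n) % n with hk
  have hAle : a % n < n := Nat.mod_lt _ hpos
  have hmod : (a + k) % n = b % n := by
    calc (a + k) % n = (a % n + k % n) % n := Nat.add_mod a k n
      _ = (a % n + (b + n - a % n) % n) % n := by rw [hk, Nat.mod_mod_of_dvd]; rfl
      _ = (a % n + (b + n - a % n)) % n :=
          (Nat.ModEq.add_left (a % n) (Nat.mod_modEq _ n))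
      _ = (b + n) % n := by rw [show a % n + (b + n - a % n) = b + n by omega]
      _ = b % n := Nat.add_mod_right b n
  have hfk : f (a + k) = f b := hcd.f_congr hmod
  have hchord : s(f a, f (a + k)) ∈ M₃ := by rw [hfk]; exact hw
  have hklt : k < n := Nat.mod_lt _ hpos
  have hk0 : k ≠ 0 := by
    intro h0
    rw [h0] at hfk
    simp only [Nat.add_zero] at hfk
    exact pm_ne h3 hw (by rw [← hfk])
  have hk1 : k ≠ 1 := by
    intro h1'
    rw [h1'] at hchord
    exact hd _ hchord (hcd.cyc_edge a)
  have hkn1 : k ≠ n - 1 := by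
    intro hn1
    have hce := hcd.cyc_edge (a + (n - 1))
    rw [show a + (n - 1) + 1 = a + n by omega, hcd.hper] at hce
    rw [Sym2.eq_swap] at hce
    rw [hn1] at hchord
    exact hd _ hchord hce
  exact ⟨k, by omega, by omega, hchord⟩

lemma third_aux [DecidableEq V] {n k₀ : ℕ} {f : ℕ → V} (hcd : CycData G N O n f)
    (h1 : IsPerfectMatching G N) (h2 : IsPerfectMatching G O) (h3 : IsPerfectMatching G M₃)
    (hd : ∀ e ∈ M₃, e ∉ N ∪ O)
    (hmix3 : ∀ M, IsPerfectMatching G M → (∃ e ∈ M, e ∈ M₃) → (∃ e ∈ M, e ∈ N ∪ O) → False)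
    (hk2 : 2 ≤ k₀) (hkn : k₀ ≤ n - 2) (hch : s(f 0, f k₀) ∈ M₃)
    (hmin : ∀ k a, 2 ≤ k → k < k₀ → s(f a, f (a + k)) ∉ M₃) :
    Nonempty (G ≃g (⊤ : SimpleGraph (Fin 4))) := by
  have h4 := hcd.four_le
  have hevn := hcd.hev
  rcases Nat.even_or_odd k₀ with hpar | hpar
  case inr =>
    -- k₀ odd: construction 1
    obtain ⟨M, hM, hMa, hMb⟩ := constr1 hcd h1 h2 h3 hk2 hkn (Nat.odd_iff.1 hpar) hch
    exact (hmix3 M hM hMa hMb).elim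
  case inl =>
    have hk0ev : k₀ % 2 = 0 := Nat.even_iff.1 hpar
    obtain ⟨t, ht2, htn, hch2⟩ := chord_exists hcd h3 hd 1
    have htk : k₀ ≤ t := by
      by_contra hc
      exact hmin t 1 ht2 (by omega) hch2
    rcases Nat.even_or_odd t with htpar | htpar
    case inr =>
      -- t odd: construction 1 on the cycle rotated by 1
      have hON : ∀ e ∈ O, e ∉ N := fun e he hn => hcd.hNO e hn he
      have hcd1 := hcd.rot_odd 1 rfl hON
      have hch2' : s(f (0 + 1), f (t + 1)) ∈ M₃ := by
        rw [show (0:ℕ) + 1 = 1 by omega, show t + 1 = 1 + t by omega]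
        exact hch2
      obtain ⟨M, hM, hMa, hMb⟩ := constr1 hcd1 h2 h1 h3 ht2 htn (Nat.odd_iff.1 htpar) hch2'
      refine (hmix3 M hM hMa ?_).elim
      obtain ⟨e, he, heu⟩ := hMb
      exact ⟨e, he, heu.elim Or.inr Or.inl⟩
    case inl =>
      have htev : t % 2 = 0 := Nat.even_iff.1 htpar
      rcases Nat.lt_or_ge n 6 with hn6 | hn6
      · -- n = 4 : K4
        have hn4 : n = 4 := by omega
        subst hn4
        have hk₀2 : k₀ = 2 := by omega
        have ht2' : t = 2 := by omega
        subst hk₀2; subst ht2'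
        refine k4_iso hcd h1 h2 (h3.1 hch) (h3.1 ?_)
        rw [show (3:ℕ) = 1 + 2 by omega]
        exact hch2
      · -- n ≥ 6 : construction 2
        have hch2' : s(f 1, f (t + 1)) ∈ M₃ := by
          rw [show t + 1 = 1 + t by omega]; exact hch2
        obtain ⟨M, hM, hMa, hMb⟩ := constr2 hcd h1 h2 h3 hk2 hk0ev
          (by omega) (by omega) (by omega) hn6 hch hch2'
        exact (hmix3 M hM hMa hMb).elim

lemma third_k4 [DecidableEq V] {n : ℕ} {f : ℕ → V} (hcd : CycData G N O n f)
    (h1 : IsPerfectMatching G N) (h2 : IsPerfectMatching G O) (h3 : IsPerfectMatching G M₃)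
    (hd : ∀ e ∈ M₃, e ∉ N ∪ O)
    (hmix3 : ∀ M, IsPerfectMatching G M → (∃ e ∈ M, e ∈ M₃) → (∃ e ∈ M, e ∈ N ∪ O) → False) :
    Nonempty (G ≃g (⊤ : SimpleGraph (Fin 4))) := by
  classical
  set P : ℕ → Prop := fun k => 2 ≤ k ∧ ∃ a, s(f a, f (a + k)) ∈ M₃ with hP
  have hPex : ∃ k, P k := by
    obtain ⟨k, hk2, hkn, hch⟩ := chord_exists hcd h3 hd 0
    exact ⟨k, hk2, 0, hch⟩
  set k₀ := Nat.find hPex with hk₀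
  obtain ⟨hk2, a₀, hch⟩ := Nat.find_spec hPex
  have hkn : k₀ ≤ n - 2 := by
    obtain ⟨k, hk2', hkn', hch'⟩ := chord_exists hcd h3 hd 0
    exact le_trans (Nat.find_le ⟨hk2', 0, hch'⟩) hkn'
  have hmin : ∀ k a, 2 ≤ k → k < k₀ → s(f a, f (a + k)) ∉ M₃ :=
    fun k a h2' hlt hc => Nat.find_min hPex hlt ⟨h2', a, hc⟩
  rcases Nat.even_or_odd a₀ with hapar | hapar
  · have hcd' := hcd.rot_even a₀ (Nat.even_iff.1 hapar)
    refine third_aux hcd' h1 h2 h3 hd hmix3 hk2 hkn ?_ ?_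
    · show s(f (0 + a₀), f (k₀ + a₀)) ∈ M₃
      rw [Nat.zero_add, Nat.add_comm k₀ a₀]
      exact hch
    · intro k a h2' hlt hc
      refine hmin k (a + a₀) h2' hlt ?_
      rw [show a + a₀ + k = a + k + a₀ by ring]
      exact hc
  · have hON : ∀ e ∈ O, e ∉ N := fun e he hn => hcd.hNO e hn he
    have hcd' := hcd.rot_odd a₀ (Nat.odd_iff.1 hapar) hON
    have hd' : ∀ e ∈ M₃, e ∉ O ∪ N := by
      intro e he hc
      exact hd e he (hc.elim Or.inr Or.inl)
    have hmix3' : ∀ M, IsPerfectMatching G M → (∃ e ∈ M, e ∈ M₃) →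
        (∃ e ∈ M, e ∈ O ∪ N) → False := by
      intro M hM hMa ⟨e, he, heu⟩
      exact hmix3 M hM hMa ⟨e, he, heu.elim Or.inr Or.inl⟩
    refine third_aux hcd' h2 h1 h3 hd' hmix3' hk2 hkn ?_ ?_
    · show s(f (0 + a₀), f (k₀ + a₀)) ∈ M₃
      rw [Nat.zero_add, Nat.add_comm k₀ a₀]
      exact hch
    · intro k a h2' hlt hc
      refine hmin k (a + a₀) h2' hlt ?_
      rw [show a + a₀ + k = a + k + a₀ by ring]
      exact hc

end PMAux

open PMAux in
theorem statement_1 {V : Type*} [Fintype V] [DecidableEq V] (G : SimpleGraph V)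
    (hK4 : ¬ Nonempty (G ≃g (⊤ : SimpleGraph (Fin 4))))
    (c : Sym2 V → ℕ)
    (hmono : ∀ M : Set (Sym2 V), IsPerfectMatching G M → ∀ e ∈ M, ∀ e' ∈ M, c e = c e')
    (hpm : ∃ M : Set (Sym2 V), IsPerfectMatching G M) :
    {i : ℕ | ∃ M : Set (Sym2 V), IsPerfectMatching G M ∧ ∀ e ∈ M, c e = i}.encard = 2 ↔
    ∃ (M₁ M₂ : Set (Sym2 V)) (i j : ℕ), i ≠ j ∧
      IsPerfectMatching G M₁ ∧ IsPerfectMatching G M₂ ∧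
      (∀ e ∈ M₁, c e = i) ∧ (∀ e ∈ M₂, c e = j) ∧ Disjoint M₁ M₂ ∧
      ∃ (v : V) (p : G.Walk v v), p.IsHamiltonianCycle ∧
        ∀ e : Sym2 V, e ∈ p.edges ↔ e ∈ M₁ ∪ M₂ := by
  classical
  constructor
  · -- forward direction
    intro hL
    obtain ⟨i, j, hij, hset⟩ := Set.encard_eq_two.1 hL
    have hi : ∃ M : Set (Sym2 V), IsPerfectMatching G M ∧ ∀ e ∈ M, c e = i := by
      have : i ∈ {i : ℕ | ∃ M : Set (Sym2 V), IsPerfectMatching G M ∧ ∀ e ∈ M, c e = i} := by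
        rw [hset]; exact Set.mem_insert _ _
      exact this
    have hj : ∃ M : Set (Sym2 V), IsPerfectMatching G M ∧ ∀ e ∈ M, c e = j := by
      have : j ∈ {i : ℕ | ∃ M : Set (Sym2 V), IsPerfectMatching G M ∧ ∀ e ∈ M, c e = i} := by
        rw [hset]; exact Set.mem_insert_of_mem _ rfl
      exact this
    obtain ⟨M₁, hM₁, hci⟩ := hi
    obtain ⟨M₂, hM₂, hcj⟩ := hj
    have hV : Nonempty V := by
      by_contra hV
      have hmem : (i + j + 1) ∈
          {i : ℕ | ∃ M : Set (Sym2 V), IsPerfectMatching G M ∧ ∀ e ∈ M, c e = i} := by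
        refine ⟨∅, ⟨Set.empty_subset _, fun v => (hV ⟨v⟩).elim⟩,
          fun e he => absurd he (Set.notMem_empty e)⟩
      rw [hset] at hmem
      simp only [Set.mem_insert_iff, Set.mem_singleton_iff] at hmem
      omega
    have hdisj : ∀ e ∈ M₁, e ∉ M₂ := fun e he1 he2 => hij ((hci e he1).symm.trans (hcj e he2))
    have hmix : ∀ M, IsPerfectMatching G M → (∃ e ∈ M, e ∈ M₁) → (∃ e ∈ M, e ∈ M₂) → False := by
      rintro M hM ⟨e, heM, he1⟩ ⟨e', he'M, he'2⟩
      have := hmono M hM e heM e' he'M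
      rw [hci e he1, hcj e' he'2] at this
      exact hij this
    obtain ⟨n, fs, hcd⟩ := exists_cyc hM₁ hM₂ hdisj hmix
    obtain ⟨v, p, hp, hpe⟩ := cyc_walk hcd hM₁ hM₂
    exact ⟨M₁, M₂, i, j, hij, hM₁, hM₂, hci, hcj, Set.disjoint_left.2 hdisj, v, p, hp, hpe⟩
  · -- backward direction
    rintro ⟨M₁, M₂, i, j, hij, hM₁, hM₂, hci, hcj, hdisj, v, p, hp, hpe⟩
    have hV : Nonempty V := ⟨v⟩
    have hdisj' : ∀ e ∈ M₁, e ∉ M₂ := fun e he1 he2 => Set.disjoint_left.1 hdisj he1 he2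
    have hmix : ∀ M, IsPerfectMatching G M → (∃ e ∈ M, e ∈ M₁) → (∃ e ∈ M, e ∈ M₂) → False := by
      rintro M hM ⟨e, heM, he1⟩ ⟨e', he'M, he'2⟩
      have := hmono M hM e heM e' he'M
      rw [hci e he1, hcj e' he'2] at this
      exact hij this
    have hkey : {i : ℕ | ∃ M : Set (Sym2 V), IsPerfectMatching G M ∧ ∀ e ∈ M, c e = i}
        = {i, j} := by
      apply Set.eq_of_subset_of_subset
      · rintro l ⟨M₃, hM₃, hcl⟩
        by_contra hl
        simp only [Set.mem_insert_iff, Set.mem_singleton_iff, not_or] at hl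
        obtain ⟨hli, hlj⟩ := hl
        have hd : ∀ e ∈ M₃, e ∉ M₁ ∪ M₂ := by
          rintro e he (h | h)
          · exact hli ((hcl e he).symm.trans (hci e h))
          · exact hlj ((hcl e he).symm.trans (hcj e h))
        have hmix3 : ∀ M, IsPerfectMatching G M → (∃ e ∈ M, e ∈ M₃) →
            (∃ e ∈ M, e ∈ M₁ ∪ M₂) → False := by
          rintro M hM ⟨e, heM, he3⟩ ⟨e', he'M, he'u⟩
          have hee' := hmono M hM e heM e' he'M
          rw [hcl e he3] at hee'
          rcases he'u with h | h
          · rw [hci e' h] at hee'; exact hli hee'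
          · rw [hcj e' h] at hee'; exact hlj hee'
        obtain ⟨n, fs, hcd⟩ := exists_cyc hM₁ hM₂ hdisj' hmix
        exact hK4 (third_k4 hcd hM₁ hM₂ hM₃ hd hmix3)
      · rintro l (rfl | rfl)
        · exact ⟨M₁, hM₁, hci⟩
        · exact ⟨M₂, hM₂, hcj⟩
    rw [hkey]
    exact Set.encard_pair hij
end

section
/- Assume Condition (*). Then G has no illegal edges: every edge {i, j} of G is either a C-edge (j = i+1 or i = j+1 in ZMod (2n)) or joins two vertices of the same parity. -/
/-- `G` is matching covered: every edge lies in some perfect matching. -/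
def MatchingCovered {V : Type*} (G : SimpleGraph V) : Prop :=
  ∀ e ∈ G.edgeSet, ∃ M : Set (Sym2 V), IsPerfectMatching G M ∧ e ∈ M

/-- `e` is a C-edge: an edge of the distinguished Hamiltonian cycle `0, 1, …, 2n-1`
on `ZMod (2n)`, i.e. `e = {i, i+1}` for some `i`. -/
def IsCEdge (n : ℕ) (e : Sym2 (ZMod (2 * n))) : Prop :=
  ∃ i : ZMod (2 * n), e = s(i, i + 1)

/-- `e` is a legal edge: it joins two vertices of the same parity
(the parity of the residue is well defined since the modulus `2n` is even). -/
def IsLegal (n : ℕ) (e : Sym2 (ZMod (2 * n))) : Prop :=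
  ∃ a b : ZMod (2 * n), e = s(a, b) ∧ a.val % 2 = b.val % 2

/-- `k` lies on the arc strictly between `i` and `j` in clockwise (increasing) order,
i.e. `k ∈ {i+1, i+2, …, j-1}`. -/
def InArc (n : ℕ) (i j k : ZMod (2 * n)) : Prop :=
  0 < (k - i).val ∧ (k - i).val < (j - i).val

/-- Edges `e = {a, b}` and `e'` cross: `e'` has one endpoint in `P(e)` (the arc strictly
between `a` and `b`) and its other endpoint in `P'(e)` (the arc strictly between `b` and `a`). -/
def Crosses (n : ℕ) (e e' : Sym2 (ZMod (2 * n))) : Prop :=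
  ∃ a b x y : ZMod (2 * n), e = s(a, b) ∧ e' = s(x, y) ∧ InArc n a b x ∧ InArc n b a y

/-- `{e, e'}` is a drum: an unordered pair of crossing legal edges of the form
`{u, v}` and `{u+1, v+1}`. -/
def IsDrum (n : ℕ) (e e' : Sym2 (ZMod (2 * n))) : Prop :=
  IsLegal n e ∧ IsLegal n e' ∧ Crosses n e e' ∧
  ∃ u v : ZMod (2 * n),
    (e = s(u, v) ∧ e' = s(u + 1, v + 1)) ∨ (e' = s(u, v) ∧ e = s(u + 1, v + 1))

/-- Condition (*): `n ≥ 3`, `G` (on vertex set `ZMod (2n)`) contains every C-edge,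
`G` is matching covered, `c` is a PMValid 2-edge-colouring of `G` with colours
red (= 1) and blue (= 2), and the C-edges are coloured alternately:
the edge `{i, i+1}` is red when `i` is odd and blue when `i` is even. -/
def CondStar (n : ℕ) (G : SimpleGraph (ZMod (2 * n))) (c : Sym2 (ZMod (2 * n)) → ℕ) : Prop :=
  3 ≤ n ∧ (∀ i : ZMod (2 * n), G.Adj i (i + 1)) ∧ MatchingCovered G ∧ PMValid G c 2 ∧
  ∀ i : ZMod (2 * n), c (s(i, i + 1)) = if i.val % 2 = 1 then 1 else 2

/-! An illegal edge `{a, b}` with `a` even splits the cycle into two paths with an even number of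
inner vertices each. Matching the inner vertices of each path along the cycle, together with
`{a, b}`, gives a perfect matching that uses the red C-edge `{a+1, a+2}` and the blue C-edge
`{b+1, b+2}`, so it is not monochromatic. -/

lemma isPerfectMatching_range_of_involutive {V : Type*} {G : SimpleGraph V} {f : V → V}
    (hf : Function.Involutive f) (hadj : ∀ v, G.Adj v (f v)) :
    IsPerfectMatching G (Set.range fun v => s(v, f v)) := by
  refine ⟨by rintro _ ⟨v, rfl⟩; exact hadj v, fun v => ⟨s(v, f v), ⟨⟨v, rfl⟩, Sym2.mem_mk_left _ _⟩, ?_⟩⟩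
  rintro _ ⟨⟨w, rfl⟩, hvw⟩
  rcases Sym2.mem_iff.mp hvw with rfl | rfl
  · rfl
  · rw [hf w, Sym2.eq_swap]

/-- The partner of the offset `t` in the matching of the cycle `0, 1, …, m - 1` that pairs `0`
with `d` and matches the two arcs between them along the cycle. -/
def arcPartner (d t : ℕ) : ℕ :=
  if t = 0 then d
  else if t = d then 0
  else if t < d ∧ t % 2 = 1 ∨ d < t ∧ t % 2 = 0 then t + 1
  else t - 1

namespace arcPartner

variable {d t : ℕ}

lemma involutive (hd : d % 2 = 1) : Function.Involutive (arcPartner d) := by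
  intro t
  unfold arcPartner
  grind

lemma lt {m : ℕ} (hm : m % 2 = 0) (hdm : d < m) (ht : t < m) : arcPartner d t < m := by
  unfold arcPartner
  grind

lemma eq_succ_or_succ_eq_or_eq_zero (t : ℕ) :
    arcPartner d t = t + 1 ∨ t = arcPartner d t + 1 ∨ (t = 0 ∧ arcPartner d t = d) ∨
      (t = d ∧ arcPartner d t = 0) := by
  unfold arcPartner
  grind

lemma eq_succ (h0 : t ≠ 0) (hd : t ≠ d) (hpar : t < d ∧ t % 2 = 1 ∨ d < t ∧ t % 2 = 0) :
    arcPartner d t = t + 1 := by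
  simp [arcPartner, h0, hd, hpar]

end arcPartner

namespace ZMod

variable {N : ℕ}

lemma val_add_natCast_sub {t : ℕ} (ht : t < N) (x : ZMod N) : (x + t - x).val = t := by
  rw [add_sub_cancel_left, val_cast_of_lt ht]

variable [NeZero N]

lemma val_add_mod_two (hN : 2 ∣ N) (x y : ZMod N) : (x + y).val % 2 = (x.val + y.val) % 2 := by
  rw [val_add, Nat.mod_mod_of_dvd _ hN]

lemma val_sub_mod_two (hN : 2 ∣ N) (x y : ZMod N) : (x - y).val % 2 = (x.val + y.val) % 2 := by
  have := val_add_mod_two hN (x - y) y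
  rw [sub_add_cancel] at this
  omega

lemma val_sub_ne_one {x y : ZMod N} (h : x ≠ y + 1) : (x - y).val ≠ 1 := by
  intro h1
  apply h
  rw [← sub_add_cancel x y, ← natCast_zmod_val (x - y), h1, Nat.cast_one, add_comm]

lemma val_sub_add_one_ne {x y : ZMod N} (h : y ≠ x + 1) : (x - y).val + 1 ≠ N := by
  intro h1
  apply h
  have : x - y + 1 = 0 := by
    rw [← natCast_zmod_val (x - y), ← Nat.cast_add_one, h1, natCast_self]
  linear_combination -this

lemma val_add_one_mod_two (hN : 2 ∣ N) (x : ZMod N) : (x + 1).val % 2 = (x.val + 1) % 2 := by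
  have : 1 < N := by obtain ⟨k, rfl⟩ := hN; have := NeZero.ne (2 * k); omega
  rw [val_add_mod_two hN, val_one_eq_one_mod, Nat.mod_eq_of_lt this]

def offsetPartner (a : ZMod N) (d : ℕ) (v : ZMod N) : ZMod N :=
  a + arcPartner d (v - a).val

variable {a : ZMod N} {d : ℕ}

lemma val_offsetPartner_sub (hN : 2 ∣ N) (hdN : d < N) (v : ZMod N) :
    (offsetPartner a d v - a).val = arcPartner d (v - a).val := by
  rw [offsetPartner, add_sub_cancel_left,
    val_cast_of_lt (arcPartner.lt (Nat.mod_eq_zero_of_dvd hN) hdN (val_lt _))]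

lemma offsetPartner_involutive (hN : 2 ∣ N) (hd : d % 2 = 1) (hdN : d < N) :
    Function.Involutive (offsetPartner a d) := by
  intro v
  rw [offsetPartner, val_offsetPartner_sub hN hdN, arcPartner.involutive hd, natCast_zmod_val]
  ring

lemma eq_of_val_sub_eq {x y : ZMod N} (h : (x - a).val = (y - a).val) : x = y :=
  sub_left_inj.mp (val_injective _ h)

lemma eq_add_one_of_val_sub_eq {x y : ZMod N} (h : (x - a).val = (y - a).val + 1) : x = y + 1 := by
  rw [← sub_add_cancel x a, ← natCast_zmod_val (x - a), h, Nat.cast_succ, natCast_zmod_val]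
  ring

lemma offsetPartner_eq_add_one (hN : 2 ∣ N) (hdN : d < N) {v : ZMod N}
    (h : arcPartner d (v - a).val = (v - a).val + 1) : offsetPartner a d v = v + 1 :=
  eq_add_one_of_val_sub_eq ((val_offsetPartner_sub hN hdN v).trans h)

lemma mk_add_one_mem_range_offsetPartner (hN : 2 ∣ N) (hdN : d < N) {v : ZMod N}
    (h : arcPartner d (v - a).val = (v - a).val + 1) :
    s(v, v + 1) ∈ Set.range fun w => s(w, offsetPartner a d w) :=
  ⟨v, congrArg (s(v, ·)) (offsetPartner_eq_add_one hN hdN h)⟩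

variable {b : ZMod N} {G : SimpleGraph (ZMod N)}

lemma adj_offsetPartner (hN : 2 ∣ N) (hC : ∀ i : ZMod N, G.Adj i (i + 1)) (hab : G.Adj a b)
    (v : ZMod N) : G.Adj v (offsetPartner a (b - a).val v) := by
  have hp := val_offsetPartner_sub (a := a) hN (val_lt (b - a)) v
  rcases arcPartner.eq_succ_or_succ_eq_or_eq_zero (d := (b - a).val) (v - a).val
    with h | h | ⟨h, h'⟩ | ⟨h, h'⟩
  · rw [offsetPartner_eq_add_one hN (val_lt _) h]
    exact hC v
  · rw [← hp] at h
    conv_lhs => rw [eq_add_one_of_val_sub_eq h]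
    exact (hC _).symm
  · rw [eq_of_val_sub_eq (hp.trans h'), sub_eq_zero.mp ((val_eq_zero _).mp h)]
    exact hab
  · rw [sub_eq_zero.mp ((val_eq_zero _).mp (hp.trans h')), eq_of_val_sub_eq h]
    exact hab.symm

lemma isPerfectMatching_offsetPartner (hN : 2 ∣ N) (hC : ∀ i : ZMod N, G.Adj i (i + 1))
    (hab : G.Adj a b) (hd : (b - a).val % 2 = 1) :
    IsPerfectMatching G (Set.range fun v => s(v, offsetPartner a (b - a).val v)) :=
  isPerfectMatching_range_of_involutive (offsetPartner_involutive hN hd (val_lt _))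
    (adj_offsetPartner hN hC hab)

end ZMod

open ZMod in
lemma false_of_adj_of_even_of_odd {N : ℕ} [NeZero N] (hN : 2 ∣ N) {G : SimpleGraph (ZMod N)}
    {c : Sym2 (ZMod N) → ℕ} (hC : ∀ i : ZMod N, G.Adj i (i + 1))
    (hmono : ∀ M : Set (Sym2 (ZMod N)), IsPerfectMatching G M → ∀ e ∈ M, ∀ e' ∈ M, c e = c e')
    (halt : ∀ i : ZMod N, c (s(i, i + 1)) = if i.val % 2 = 1 then 1 else 2)
    {a b : ZMod N} (hab : G.Adj a b) (ha : a.val % 2 = 0) (hb : b.val % 2 = 1)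
    (hb_ne : b ≠ a + 1) (ha_ne : a ≠ b + 1) : False := by
  set d := (b - a).val with hd_def
  have hd : d % 2 = 1 := by rw [hd_def, val_sub_mod_two hN]; omega
  have hd1 : d ≠ 1 := val_sub_ne_one hb_ne
  have hdN : d + 1 ≠ N := val_sub_add_one_ne ha_ne
  have hdlt : d < N := val_lt _
  have hM := isPerfectMatching_offsetPartner hN hC hab hd
  have hred := mk_add_one_mem_range_offsetPartner (a := a) (v := a + 1) hN hdlt <| by
    have h1 : (a + 1 - a).val = 1 := by simpa using val_add_natCast_sub (t := 1) (by omega) a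
    rw [h1]
    exact arcPartner.eq_succ (by omega) (by omega) (by omega)
  have hblue := mk_add_one_mem_range_offsetPartner (a := a) (v := b + 1) hN hdlt <| by
    have h1 : (b + 1 - a).val = d + 1 := by
      have := val_add_natCast_sub (t := d + 1) (by omega) a
      rwa [Nat.cast_succ, hd_def, natCast_zmod_val, ← add_assoc, add_sub_cancel] at this
    rw [h1]
    exact arcPartner.eq_succ (by omega) (by omega) (by omega)
  have := hmono _ hM _ hred _ hblue
  rw [halt, halt, val_add_one_mod_two hN, val_add_one_mod_two hN] at this
  split_ifs at this <;> omega

theorem statement_2 (n : ℕ) (G : SimpleGraph (ZMod (2 * n)))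
    (c : Sym2 (ZMod (2 * n)) → ℕ) (h : CondStar n G c) :
    ∀ e ∈ G.edgeSet, IsCEdge n e ∨ IsLegal n e := by
  obtain ⟨hn, hC, -, ⟨-, hmono, -⟩, halt⟩ := h
  have : NeZero (2 * n) := ⟨by omega⟩
  intro e he
  induction e using Sym2.inductionOn with
  | hf a b =>
    by_cases hba : b = a + 1
    · exact Or.inl ⟨a, by rw [hba]⟩
    by_cases hab : a = b + 1
    · exact Or.inl ⟨b, by rw [hab, Sym2.eq_swap]⟩
    by_cases hpar : a.val % 2 = b.val % 2
    · exact Or.inr ⟨a, b, rfl, hpar⟩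
    have hadj : G.Adj a b := he
    have h2 : 2 ∣ 2 * n := dvd_mul_right 2 n
    exfalso
    rcases Nat.mod_two_eq_zero_or_one a.val with ha | ha
    · exact false_of_adj_of_even_of_odd h2 hC hmono halt hadj ha (by omega) hba hab
    · exact false_of_adj_of_even_of_odd h2 hC hmono halt hadj.symm (by omega) ha hab hba
end

section
/- Assume Condition (*). Then every nice crossing pair of G forms a monochromatic drum: if e is a legal edge of G joining two odd vertices, e' is a legal edge of G joining two even vertices, and e and e' cross, then {e, e'} is a drum, and the four edges of this drum (e, e' and the two C-edges joining their endpoints) all receive the same colour under c. -/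
set_option linter.unusedVariables false
set_option linter.unusedSectionVars false

/-- pairing function on offsets, for building the explicit perfect matching -/
private def qf (d1 d2 d3 t : ℕ) : ℕ :=
  if t = 0 then d2 else if t = d2 then 0 else if t = d1 then d2 + d3
  else if t = d2 + d3 then d1
  else if t < d1 ∨ (d2 < t ∧ t < d2 + d3) then (if t % 2 = 1 then t + 1 else t - 1)
  else (if t % 2 = 0 then t + 1 else t - 1)

private lemma qf_lt {n d1 d2 d3 : ℕ} (h1 : d1 % 2 = 1) (h2 : d2 % 2 = 0) (h3 : d3 % 2 = 1)
    (hp2 : d1 < d2) (hp4 : d2 + d3 < 2 * n) :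
    ∀ t < 2 * n, qf d1 d2 d3 t < 2 * n := by
  intro t ht; unfold qf; split_ifs <;> omega

set_option maxHeartbeats 1000000 in
private lemma qf_invol {n d1 d2 d3 : ℕ} (h1 : d1 % 2 = 1) (h2 : d2 % 2 = 0) (h3 : d3 % 2 = 1)
    (hp1 : 0 < d1) (hp2 : d1 < d2) (hp3 : 0 < d3) (hp4 : d2 + d3 < 2 * n) :
    ∀ t < 2 * n, qf d1 d2 d3 (qf d1 d2 d3 t) = t := by
  intro t ht
  have e1 : qf d1 d2 d3 t = if t = 0 then d2 else if t = d2 then 0 else if t = d1 then d2 + d3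
      else if t = d2 + d3 then d1
      else if t < d1 ∨ (d2 < t ∧ t < d2 + d3) then (if t % 2 = 1 then t + 1 else t - 1)
      else (if t % 2 = 0 then t + 1 else t - 1) := rfl
  set s := qf d1 d2 d3 t with hs
  have e2 : qf d1 d2 d3 s = if s = 0 then d2 else if s = d2 then 0 else if s = d1 then d2 + d3
      else if s = d2 + d3 then d1
      else if s < d1 ∨ (d2 < s ∧ s < d2 + d3) then (if s % 2 = 1 then s + 1 else s - 1)
      else (if s % 2 = 0 then s + 1 else s - 1) := rfl
  rw [e2]
  clear_value s
  split_ifs at e1 ⊢ <;> omega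

private lemma qf_ne {n d1 d2 d3 : ℕ} (h1 : d1 % 2 = 1) (h2 : d2 % 2 = 0) (h3 : d3 % 2 = 1)
    (hp2 : d1 < d2) :
    ∀ t < 2 * n, qf d1 d2 d3 t ≠ t := by
  intro t ht; unfold qf; split_ifs <;> omega

private lemma qf_step {n d1 d2 d3 : ℕ} (h1 : d1 % 2 = 1) (h2 : d2 % 2 = 0) (h3 : d3 % 2 = 1)
    (hp2 : d1 < d2) :
    ∀ t < 2 * n, t ≠ 0 → t ≠ d1 → t ≠ d2 → t ≠ d2 + d3 →
    qf d1 d2 d3 t = t + 1 ∨ (qf d1 d2 d3 t = t - 1 ∧ 1 ≤ t) := by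
  intro t ht; unfold qf; split_ifs <;> omega

private lemma qf_zero {d1 d2 d3 : ℕ} : qf d1 d2 d3 0 = d2 := by simp [qf]

private lemma qf_d1 {d1 d2 d3 : ℕ} (hp1 : 0 < d1) (hp2 : d1 < d2) :
    qf d1 d2 d3 d1 = d2 + d3 := by
  unfold qf; split_ifs <;> omega

private lemma qf_d2 {d1 d2 d3 : ℕ} (hp1 : 0 < d1) (hp2 : d1 < d2) (hp3 : 0 < d3) :
    qf d1 d2 d3 d2 = 0 := by
  unfold qf; split_ifs <;> omega

private lemma qf_d23 {d1 d2 d3 : ℕ} (hp1 : 0 < d1) (hp2 : d1 < d2) (hp3 : 0 < d3) :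
    qf d1 d2 d3 (d2 + d3) = d1 := by
  unfold qf; split_ifs <;> omega

private lemma qf_blue {d1 d2 d3 : ℕ} (h1 : d1 % 2 = 1) (h2 : d2 % 2 = 0) (h3 : d3 % 2 = 1)
    (hp2 : d1 < d2) :
    ∀ t, t % 2 = 1 → (t < d1 ∨ (d2 < t ∧ t < d2 + d3)) → qf d1 d2 d3 t = t + 1 := by
  intro t hto hb; unfold qf; split_ifs <;> omega

private lemma qf_red {n d1 d2 d3 : ℕ} (h1 : d1 % 2 = 1) (h2 : d2 % 2 = 0) (h3 : d3 % 2 = 1)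
    (hp2 : d1 < d2) :
    ∀ t, t % 2 = 0 → ((d1 < t ∧ t < d2) ∨ (d2 + d3 < t ∧ t < 2 * n)) →
    qf d1 d2 d3 t = t + 1 := by
  intro t hte hr; unfold qf; split_ifs <;> omega

private lemma cast_val_eq {m : ℕ} [NeZero m] (u : ZMod m) : ((u.val : ℕ) : ZMod m) = u :=
  ZMod.natCast_rightInverse u

private lemma valmod2 {n : ℕ} [NeZero (2 * n)] (a : ZMod (2 * n)) (t : ℕ) :
    (a + (t : ZMod (2 * n))).val % 2 = (a.val + t) % 2 := by
  have h1 : (a + (t : ZMod (2 * n))).val = (a.val + ((t : ZMod (2 * n))).val) % (2 * n) :=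
    ZMod.val_add _ _
  have h2 : ((t : ZMod (2 * n))).val = t % (2 * n) := ZMod.val_natCast _ t
  have h3 : ∀ m : ℕ, m % (2 * n) % 2 = m % 2 := fun m => Nat.mod_mod_of_dvd m ⟨n, rfl⟩
  rw [h1, h2, h3]
  have := h3 t
  omega

private lemma ofs_eq {n : ℕ} (a : ZMod (2 * n)) (t : ℕ) (ht : t < 2 * n) :
    ((a + (t : ZMod (2 * n))) - a).val = t := by
  rw [add_sub_cancel_left, ZMod.val_natCast, Nat.mod_eq_of_lt ht]

private lemma two_ne {n : ℕ} [NeZero (2 * n)] (hn : 3 ≤ n) : (2 : ZMod (2 * n)) ≠ 0 := by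
  have : ((2 : ℕ) : ZMod (2 * n)) ≠ 0 := by
    rw [Ne, ZMod.natCast_eq_zero_iff]
    intro hd; have := Nat.le_of_dvd (by norm_num) hd; omega
  simpa using this

private lemma four_ne {n : ℕ} [NeZero (2 * n)] (hn : 3 ≤ n) : (4 : ZMod (2 * n)) ≠ 0 := by
  have : ((4 : ℕ) : ZMod (2 * n)) ≠ 0 := by
    rw [Ne, ZMod.natCast_eq_zero_iff]
    intro hd; have := Nat.le_of_dvd (by norm_num) hd; omega
  simpa using this


/-- `e` joins two odd vertices. -/
def OddOdd (n : ℕ) (e : Sym2 (ZMod (2 * n))) : Prop :=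
  ∃ a b : ZMod (2 * n), e = s(a, b) ∧ a.val % 2 = 1 ∧ b.val % 2 = 1

/-- `e` joins two even vertices. -/
def EvenEven (n : ℕ) (e : Sym2 (ZMod (2 * n))) : Prop :=
  ∃ a b : ZMod (2 * n), e = s(a, b) ∧ a.val % 2 = 0 ∧ b.val % 2 = 0

theorem statement_3 (n : ℕ) (G : SimpleGraph (ZMod (2 * n)))
    (c : Sym2 (ZMod (2 * n)) → ℕ) (h : CondStar n G c)
    (e e' : Sym2 (ZMod (2 * n))) (he : e ∈ G.edgeSet) (he' : e' ∈ G.edgeSet)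
    (hodd : OddOdd n e) (heven : EvenEven n e') (hcross : Crosses n e e') :
    IsDrum n e e' ∧
    ∀ u v : ZMod (2 * n),
      ((e = s(u, v) ∧ e' = s(u + 1, v + 1)) ∨ (e' = s(u, v) ∧ e = s(u + 1, v + 1))) →
      c e = c e' ∧ c (s(u, u + 1)) = c e ∧ c (s(v, v + 1)) = c e := by
  obtain ⟨hn, hC, hmc, hPMV, hcol⟩ := h
  haveI : NeZero (2 * n) := ⟨by omega⟩
  obtain ⟨a, b, x, y, heab, hexy, ⟨hd1pos, hd1lt⟩, ⟨hd3pos, hd3lt⟩⟩ := hcross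
  -- parities of endpoints
  obtain ⟨a₀, b₀, h₀, ha₀, hb₀⟩ := hodd
  obtain ⟨x₀, y₀, h₀', hx₀, hy₀⟩ := heven
  have habpar : a.val % 2 = 1 ∧ b.val % 2 = 1 := by
    rcases Sym2.eq_iff.mp (h₀.symm.trans heab) with ⟨h1', h2'⟩ | ⟨h1', h2'⟩
    · exact ⟨h1' ▸ ha₀, h2' ▸ hb₀⟩
    · exact ⟨h2' ▸ hb₀, h1' ▸ ha₀⟩
  have hxypar : x.val % 2 = 0 ∧ y.val % 2 = 0 := by
    rcases Sym2.eq_iff.mp (h₀'.symm.trans hexy) with ⟨h1', h2'⟩ | ⟨h1', h2'⟩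
    · exact ⟨h1' ▸ hx₀, h2' ▸ hy₀⟩
    · exact ⟨h2' ▸ hy₀, h1' ▸ hx₀⟩
  obtain ⟨hapar, hbpar⟩ := habpar
  obtain ⟨hxpar, hypar⟩ := hxypar
  set d1 := (x - a).val with hd1def
  set d2 := (b - a).val with hd2def
  set d3 := (y - b).val with hd3def
  have hd2lt2n : d2 < 2 * n := ZMod.val_lt _
  have hd2pos : 0 < d2 := lt_trans hd1pos hd1lt
  have hba0 : b - a ≠ 0 := by
    intro h0; rw [h0, ZMod.val_zero] at hd2def; omega
  have hd4 : (a - b).val = 2 * n - d2 := by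
    have hab' : a - b = -(b - a) := by ring
    rw [hab', ZMod.neg_val, if_neg hba0, ← hd2def]
  have hd23lt : d2 + d3 < 2 * n := by rw [hd4] at hd3lt; omega
  -- coordinates
  have hx_eq : x = a + ((d1 : ℕ) : ZMod (2 * n)) := by
    rw [hd1def, cast_val_eq]; ring
  have hb_eq : b = a + ((d2 : ℕ) : ZMod (2 * n)) := by
    rw [hd2def, cast_val_eq]; ring
  have hy_eq : y = b + ((d3 : ℕ) : ZMod (2 * n)) := by
    rw [hd3def, cast_val_eq]; ring
  have hy23 : y = a + (((d2 + d3 : ℕ)) : ZMod (2 * n)) := by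
    rw [hy_eq, hb_eq]; push_cast; ring
  -- parities of offsets
  have hd1odd : d1 % 2 = 1 := by
    have h' := valmod2 a d1
    rw [← hx_eq] at h'
    omega
  have hd2even : d2 % 2 = 0 := by
    have h' := valmod2 a d2
    rw [← hb_eq] at h'
    omega
  have hd3odd : d3 % 2 = 1 := by
    have h' := valmod2 a (d2 + d3)
    rw [← hy23] at h'
    omega
  -- the partner function and the matching
  set p : ZMod (2 * n) → ZMod (2 * n) :=
    fun v => a + ((qf d1 d2 d3 ((v - a).val) : ℕ) : ZMod (2 * n)) with hp0
  have hpdef : ∀ v, p v = a + ((qf d1 d2 d3 ((v - a).val) : ℕ) : ZMod (2 * n)) :=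
    fun v => rfl
  set M : Set (Sym2 (ZMod (2 * n))) := {z | ∃ v : ZMod (2 * n), z = s(v, p v)} with hM0
  have hqlt := qf_lt (n := n) hd1odd hd2even hd3odd hd1lt hd23lt
  have hofs : ∀ v : ZMod (2 * n), (v - a).val < 2 * n := fun v => ZMod.val_lt _
  have hpt : ∀ t : ℕ, t < 2 * n →
      p (a + (t : ZMod (2 * n))) = a + ((qf d1 d2 d3 t : ℕ) : ZMod (2 * n)) := by
    intro t ht; rw [hpdef, ofs_eq a t ht]
  have hinv : ∀ v, p (p v) = v := by
    intro v
    have ht := hofs v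
    rw [hpdef v, hpt _ (hqlt _ ht),
      qf_invol (n := n) hd1odd hd2even hd3odd hd1pos hd1lt hd3pos hd23lt _ ht, cast_val_eq]
    ring
  -- special values of p
  have hpa : p a = b := by
    rw [hpdef, sub_self, ZMod.val_zero, qf_zero, ← hb_eq]
  have hpx : p x = y := by
    have hxofs : (x - a).val = d1 := rfl
    rw [hpdef, hxofs, qf_d1 hd1pos hd1lt, ← hy23]
  have hpb : p b = a := by
    have hbofs : (b - a).val = d2 := rfl
    rw [hpdef, hbofs, qf_d2 hd1pos hd1lt hd3pos]
    simp
  have hpy : p y = x := by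
    have hyofs : (y - a).val = d2 + d3 := by
      rw [hy23]; exact ofs_eq a _ hd23lt
    rw [hpdef, hyofs, qf_d23 hd1pos hd1lt hd3pos, ← hx_eq]
  have heM : e ∈ M := ⟨a, by rw [heab, hpa]⟩
  have he'M : e' ∈ M := ⟨x, by rw [hexy, hpx]⟩
  have hCe : ∀ t : ℕ, t < 2 * n → qf d1 d2 d3 t = t + 1 →
      s(a + (t : ZMod (2 * n)), a + (t : ZMod (2 * n)) + 1) ∈ M := by
    intro t ht hq
    refine ⟨a + (t : ZMod (2 * n)), ?_⟩
    rw [hpt t ht, hq]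
    have hcast : (((t + 1 : ℕ)) : ZMod (2 * n)) = (t : ZMod (2 * n)) + 1 := by push_cast; ring
    rw [hcast, ← add_assoc]
  -- M is a perfect matching
  have hPM : IsPerfectMatching G M := by
    constructor
    · rintro z ⟨v, rfl⟩
      have ht : (v - a).val < 2 * n := hofs v
      have hv : v = a + (((v - a).val : ℕ) : ZMod (2 * n)) := by rw [cast_val_eq]; ring
      by_cases h0 : (v - a).val = 0
      · have hva : v = a := by
          rw [hv, h0]; simp
        rw [hva, hpa, ← heab]; exact he
      · by_cases hh1 : (v - a).val = d1
        · have hvx : v = x := by rw [hv, hh1, ← hx_eq]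
          rw [hvx, hpx, ← hexy]; exact he'
        · by_cases hh2 : (v - a).val = d2
          · have hvb : v = b := by rw [hv, hh2, ← hb_eq]
            rw [hvb, hpb, Sym2.eq_swap, ← heab]; exact he
          · by_cases hh3 : (v - a).val = d2 + d3
            · have hvy : v = y := by rw [hv, hh3, ← hy23]
              rw [hvy, hpy, Sym2.eq_swap, ← hexy]; exact he'
            · rcases qf_step (n := n) hd1odd hd2even hd3odd hd1lt _ ht h0 hh1 hh2 hh3 with
                hq | ⟨hq, ht1⟩
              · have hpv : p v = v + 1 := by
                  rw [hpdef, hq]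
                  have hcast : (((v - a).val + 1 : ℕ) : ZMod (2 * n)) =
                      (((v - a).val : ℕ) : ZMod (2 * n)) + 1 := by push_cast; ring
                  rw [hcast, cast_val_eq]; ring
                rw [hpv, SimpleGraph.mem_edgeSet]; exact hC v
              · have hpv1 : p v + 1 = v := by
                  rw [hpdef, hq, Nat.cast_sub ht1, cast_val_eq]
                  push_cast; ring
                have hzz : s(v, p v) = s(p v, p v + 1) := by rw [hpv1, Sym2.eq_swap]
                rw [hzz, SimpleGraph.mem_edgeSet]; exact hC (p v)
    · intro v
      refine ⟨s(v, p v), ⟨⟨v, rfl⟩, Sym2.mem_mk_left _ _⟩, ?_⟩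
      rintro z ⟨⟨w, rfl⟩, hvz⟩
      rcases Sym2.mem_iff.mp hvz with h' | h'
      · subst h'; rfl
      · subst h'
        rw [hinv, Sym2.eq_swap]
  have mono := hPMV.2.1 M hPM
  have hcee' : c e = c e' := mono e heM e' he'M
  -- colours of C-edges of M
  have hcolC : ∀ t : ℕ, t < 2 * n →
      c s(a + (t : ZMod (2 * n)), a + (t : ZMod (2 * n)) + 1) =
        if (a.val + t) % 2 = 1 then 1 else 2 := by
    intro t ht
    rw [hcol (a + (t : ZMod (2 * n))), valmod2]
  have hce_blue : ∀ t, t < 2 * n → t % 2 = 1 → (t < d1 ∨ (d2 < t ∧ t < d2 + d3)) →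
      c e = 2 := by
    intro t ht hto hb'
    have hq := qf_blue hd1odd hd2even hd3odd hd1lt t hto hb'
    have hm := hCe t ht hq
    have h2 := mono e heM _ hm
    rw [hcolC t ht, if_neg (by omega)] at h2
    exact h2
  have hce_red : ∀ t, t < 2 * n → t % 2 = 0 →
      ((d1 < t ∧ t < d2) ∨ (d2 + d3 < t ∧ t < 2 * n)) → c e = 1 := by
    intro t ht hte hr
    have hq := qf_red (n := n) hd1odd hd2even hd3odd hd1lt t hte hr
    have hm := hCe t ht hq
    have h2 := mono e heM _ hm
    rw [hcolC t ht, if_pos (by omega)] at h2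
    exact h2
  have hlegal_e : IsLegal n e := ⟨a, b, heab, by omega⟩
  have hlegal_e' : IsLegal n e' := ⟨x, y, hexy, by omega⟩
  have hcross' : Crosses n e e' :=
    ⟨a, b, x, y, heab, hexy, ⟨hd1pos, hd1lt⟩, ⟨hd3pos, hd3lt⟩⟩
  have hcw_red : ∀ w : ZMod (2 * n), w.val % 2 = 1 → c s(w, w + 1) = 1 := by
    intro w hw; rw [hcol, if_pos hw]
  have hcw_blue : ∀ w : ZMod (2 * n), w.val % 2 = 0 → c s(w, w + 1) = 2 := by
    intro w hw; rw [hcol, if_neg (by omega)]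
  have h2z : (2 : ZMod (2 * n)) ≠ 0 := two_ne hn
  have h4z : (4 : ZMod (2 * n)) ≠ 0 := four_ne hn
  by_cases hc1 : c e = 1
  · -- red case
    have hd1_1 : d1 = 1 := by
      by_contra hne1
      have := hce_blue 1 (by omega) (by omega) (Or.inl (by omega))
      omega
    have hd3_1 : d3 = 1 := by
      by_contra hne3
      have := hce_blue (d2 + 1) (by omega) (by omega) (Or.inr ⟨by omega, by omega⟩)
      omega
    have hx1 : x = a + 1 := by
      rw [hx_eq, hd1_1]; norm_num
    have hy1 : y = b + 1 := by
      rw [hy_eq, hd3_1]; norm_num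
    constructor
    · exact ⟨hlegal_e, hlegal_e', hcross',
        ⟨a, b, Or.inl ⟨heab, by rw [hexy, hx1, hy1]⟩⟩⟩
    · intro u v huv
      rcases huv with ⟨h1, h2⟩ | ⟨h1, h2⟩
      · refine ⟨hcee', ?_, ?_⟩
        · rcases Sym2.eq_iff.mp (h1.symm.trans heab) with ⟨hu, hv⟩ | ⟨hu, hv⟩
          · rw [hu, hc1]; exact hcw_red a hapar
          · rw [hu, hc1]; exact hcw_red b hbpar
        · rcases Sym2.eq_iff.mp (h1.symm.trans heab) with ⟨hu, hv⟩ | ⟨hu, hv⟩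
          · rw [hv, hc1]; exact hcw_red b hbpar
          · rw [hv, hc1]; exact hcw_red a hapar
      · exfalso
        rcases Sym2.eq_iff.mp (h1.symm.trans hexy) with ⟨hu, hv⟩ | ⟨hu, hv⟩ <;>
          rcases Sym2.eq_iff.mp (h2.symm.trans heab) with ⟨hu2, hv2⟩ | ⟨hu2, hv2⟩
        · -- u = x, v = y, u+1 = a, v+1 = b
          rw [hu, hx1] at hu2
          exact h2z (by linear_combination hu2)
        · -- u = x, v = y, u+1 = b, v+1 = a
          rw [hu, hx1] at hu2
          rw [hv, hy1] at hv2
          exact h4z (by linear_combination hu2 + hv2)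
        · -- u = y, v = x, u+1 = a, v+1 = b
          rw [hu, hy1] at hu2
          rw [hv, hx1] at hv2
          exact h4z (by linear_combination hu2 + hv2)
        · -- u = y, v = x, u+1 = b, v+1 = a
          rw [hu, hy1] at hu2
          exact h2z (by linear_combination hu2)
  · -- blue case
    have hR1 : d2 = d1 + 1 := by
      by_contra hne1
      exact hc1 (hce_red (d1 + 1) (by omega) (by omega) (Or.inl ⟨by omega, by omega⟩))
    have hR2 : 2 * n = d2 + d3 + 1 := by
      by_contra hne2
      exact hc1 (hce_red (d2 + d3 + 1) (by omega) (by omega) (Or.inr ⟨by omega, by omega⟩))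
    have hc2 : c e = 2 := by
      have hcases : 1 < d1 ∨ 1 < d3 := by omega
      rcases hcases with h' | h'
      · exact hce_blue 1 (by omega) (by omega) (Or.inl h')
      · exact hce_blue (d2 + 1) (by omega) (by omega) (Or.inr ⟨by omega, by omega⟩)
    have hb_x : b = x + 1 := by
      rw [hx_eq, hb_eq, hR1]; push_cast; ring
    have ha_y : a = y + 1 := by
      have hz : (((d2 + d3 : ℕ)) : ZMod (2 * n)) + 1 = 0 := by
        have hz' : (((d2 + d3 + 1 : ℕ)) : ZMod (2 * n)) = 0 := by
          rw [← hR2]; exact_mod_cast ZMod.natCast_self (2 * n)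
        push_cast at hz' ⊢
        linear_combination hz'
      rw [hy23]
      linear_combination -hz
    constructor
    · refine ⟨hlegal_e, hlegal_e', hcross', ⟨y, x, Or.inr ⟨?_, ?_⟩⟩⟩
      · rw [hexy]; exact Sym2.eq_swap
      · rw [heab, ← ha_y, ← hb_x]
    · intro u v huv
      rcases huv with ⟨h1, h2⟩ | ⟨h1, h2⟩
      · exfalso
        rcases Sym2.eq_iff.mp (h1.symm.trans heab) with ⟨hu, hv⟩ | ⟨hu, hv⟩ <;>
          rcases Sym2.eq_iff.mp (h2.symm.trans hexy) with ⟨hu2, hv2⟩ | ⟨hu2, hv2⟩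
        · -- u = a, v = b, u+1 = x, v+1 = y
          rw [hu] at hu2
          rw [hv] at hv2
          rw [← hu2] at hb_x
          rw [← hv2] at ha_y
          exact h4z (by linear_combination -hb_x - ha_y)
        · -- u = a, v = b, u+1 = y, v+1 = x
          rw [hu] at hu2
          rw [← hu2] at ha_y
          exact h2z (by linear_combination -ha_y)
        · -- u = b, v = a, u+1 = x, v+1 = y
          rw [hu] at hu2
          rw [← hu2] at hb_x
          exact h2z (by linear_combination -hb_x)
        · -- u = b, v = a, u+1 = y, v+1 = x
          rw [hu] at hu2
          rw [hv] at hv2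
          rw [← hu2] at ha_y
          rw [← hv2] at hb_x
          exact h4z (by linear_combination -ha_y - hb_x)
      · refine ⟨hcee', ?_, ?_⟩
        · rcases Sym2.eq_iff.mp (h1.symm.trans hexy) with ⟨hu, hv⟩ | ⟨hu, hv⟩
          · rw [hu, hc2]; exact hcw_blue x hxpar
          · rw [hu, hc2]; exact hcw_blue y hypar
        · rcases Sym2.eq_iff.mp (h1.symm.trans hexy) with ⟨hu, hv⟩ | ⟨hu, hv⟩
          · rw [hv, hc2]; exact hcw_blue y hypar
          · rw [hv, hc2]; exact hcw_blue x hxpar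
end

section
/- Assume Condition (*). Then each C-edge of G is part of at most one drum: for every i in ZMod (2n) there is at most one drum {{u, v}, {u+1, v+1}} formed by edges of G whose pair of C-edges {{u, u+1}, {v, v+1}} contains {i, i+1}. -/
/-- `f` is one of the two C-edges `{u, u+1}`, `{v, v+1}` of the drum `{e, e'}`
with `{e, e'} = {{u, v}, {u+1, v+1}}`. -/
def DrumCEdges (n : ℕ) (e e' f : Sym2 (ZMod (2 * n))) : Prop :=
  ∃ u v : ZMod (2 * n),
    ((e = s(u, v) ∧ e' = s(u + 1, v + 1)) ∨ (e' = s(u, v) ∧ e = s(u + 1, v + 1))) ∧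
    (f = s(u, u + 1) ∨ f = s(v, v + 1))

/-!
Suppose the C-edge `{i, i+1}` lay on two drums, with partners `a ≠ b`, say with `a` closer to `i`
clockwise. Measuring positions clockwise from `i`, write `a = i + A` and `b = i + B` with
`A < B` both even. Matching `i` with `i + A`, `i + 1` with `i + B + 1` and every other vertex
along `C` gives a perfect matching; it contains a C-edge starting at position `A + 1` when
`A < B`, but one starting at position `A + 2` when `B` is replaced by `A` (the drum at `a`
itself). Both matchings contain `{i, a}`, so they are monochromatic of the same colour,
contradicting the alternating colours of consecutive C-edges.
-/

lemma isPerfectMatching_of_involutive {V : Type*} (G : SimpleGraph V) {m : V → V}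
    (hm : Function.Involutive m) (hadj : ∀ v, G.Adj v (m v)) :
    IsPerfectMatching G (Set.range fun v => s(v, m v)) := by
  refine ⟨?_, fun v => ⟨s(v, m v), ⟨⟨v, rfl⟩, Sym2.mem_mk_left _ _⟩, ?_⟩⟩
  · rintro _ ⟨v, rfl⟩
    exact hadj v
  · rintro _ ⟨⟨w, rfl⟩, hv⟩
    rcases Sym2.mem_iff.mp hv with rfl | rfl
    · rfl
    · rw [hm, Sym2.eq_swap]

/-- The partner of position `t` in the matching pairing `0` with `A`, `1` with `B + 1`, and
every other position with a neighbour, the pairs being `{2k, 2k+1}` outside `[A, B + 1]` and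
`{2k+1, 2k+2}` inside. -/
def drumPartner (A B t : ℕ) : ℕ :=
  if t = 0 then A else if t = A then 0
  else if t = 1 then B + 1 else if t = B + 1 then 1
  else if t < A ∨ B + 1 < t then (if t % 2 = 0 then t + 1 else t - 1)
  else if t % 2 = 1 then t + 1 else t - 1

lemma drumPartner_cases (A B t : ℕ) :
    (t = 0 ∧ drumPartner A B t = A) ∨ (t = A ∧ drumPartner A B t = 0) ∨
    (t = 1 ∧ drumPartner A B t = B + 1) ∨ (t = B + 1 ∧ drumPartner A B t = 1) ∨
    drumPartner A B t = t + 1 ∨ drumPartner A B t + 1 = t := by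
  unfold drumPartner
  split_ifs <;> omega

lemma drumPartner_self_add_two {A : ℕ} (hA : A % 2 = 0) : drumPartner A A (A + 2) = A + 3 := by
  rw [drumPartner, if_neg (by omega), if_neg (by omega), if_neg (by omega), if_neg (by omega),
    if_pos (by omega), if_pos (by omega)]

lemma drumPartner_add_one {A B : ℕ} (hA : A % 2 = 0) (hA2 : 2 ≤ A) (hAB : A < B) :
    drumPartner A B (A + 1) = A + 2 := by
  rw [drumPartner, if_neg (by omega), if_neg (by omega), if_neg (by omega), if_neg (by omega),
    if_neg (by omega), if_pos (by omega)]

lemma drumPartner_lt {A B N t : ℕ} (hAB : A ≤ B) (hN : N % 2 = 0) (hBN : B + 2 ≤ N)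
    (ht : t < N) : drumPartner A B t < N := by
  unfold drumPartner
  split_ifs <;> omega

lemma drumPartner_drumPartner {A B : ℕ} (hA : A % 2 = 0) (hB : B % 2 = 0) (hA2 : 2 ≤ A)
    (hAB : A ≤ B) (t : ℕ) : drumPartner A B (drumPartner A B t) = t := by
  generalize hp : drumPartner A B t = p
  unfold drumPartner at hp ⊢
  split_ifs at hp <;> split_ifs <;> omega

section DrumMate

variable {N : ℕ}

def drumMate (i : ZMod N) (A B : ℕ) (x : ZMod N) : ZMod N :=
  i + (drumPartner A B (x - i).val : ℕ)

lemma drumMate_add_natCast (i : ZMod N) (A B : ℕ) {t : ℕ} (ht : t < N) :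
    drumMate i A B (i + t) = i + (drumPartner A B t : ℕ) := by
  simp [drumMate, ZMod.val_cast_of_lt ht]

variable [NeZero N]

lemma exists_eq_add_natCast (i x : ZMod N) : ∃ t < N, x = i + (t : ℕ) :=
  ⟨(x - i).val, ZMod.val_lt _, by rw [ZMod.natCast_zmod_val]; ring⟩

lemma drumMate_involutive {i : ZMod N} {A B : ℕ} (hA : A % 2 = 0) (hB : B % 2 = 0)
    (hN : N % 2 = 0) (hA2 : 2 ≤ A) (hAB : A ≤ B) (hBN : B + 2 ≤ N) :
    Function.Involutive (drumMate i A B) := by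
  intro x
  obtain ⟨t, ht, rfl⟩ := exists_eq_add_natCast i x
  rw [drumMate_add_natCast i A B ht,
    drumMate_add_natCast i A B (drumPartner_lt hAB hN hBN ht),
    drumPartner_drumPartner hA hB hA2 hAB]

lemma adj_drumMate (G : SimpleGraph (ZMod N)) (hC : ∀ j, G.Adj j (j + 1)) {i : ZMod N}
    {A B : ℕ} (hiA : G.Adj i (i + A)) (hiB : G.Adj (i + 1) (i + B + 1)) (x : ZMod N) :
    G.Adj x (drumMate i A B x) := by
  obtain ⟨t, ht, rfl⟩ := exists_eq_add_natCast i x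
  rw [drumMate_add_natCast i A B ht]
  rcases drumPartner_cases A B t with ⟨rfl, h⟩ | ⟨rfl, h⟩ | ⟨rfl, h⟩ | ⟨rfl, h⟩ | h | h
  · simpa [h] using hiA
  · simpa [h] using hiA.symm
  · simpa [h, add_assoc] using hiB
  · simpa [h, add_assoc] using hiB.symm
  · simpa [h, add_assoc] using hC (i + t)
  · nth_rewrite 1 [← h]
    simpa [add_assoc] using (hC (i + (drumPartner A B t : ℕ))).symm

lemma colour_eq_of_drumPartner_eq_succ (G : SimpleGraph (ZMod N)) (c : Sym2 (ZMod N) → ℕ)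
    (hC : ∀ j, G.Adj j (j + 1))
    (hmono : ∀ M, IsPerfectMatching G M → ∀ e ∈ M, ∀ e' ∈ M, c e = c e')
    {i : ZMod N} {A B : ℕ} (hA : A % 2 = 0) (hB : B % 2 = 0) (hN : N % 2 = 0)
    (hA2 : 2 ≤ A) (hAB : A ≤ B) (hBN : B + 2 ≤ N)
    (hiA : G.Adj i (i + A)) (hiB : G.Adj (i + 1) (i + B + 1))
    {t : ℕ} (ht : t < N) (hpt : drumPartner A B t = t + 1) :
    c s(i, i + A) = c s(i + t, i + t + 1) := by
  refine hmono _ (isPerfectMatching_of_involutive G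
    (drumMate_involutive hA hB hN hA2 hAB hBN) (adj_drumMate G hC hiA hiB)) _ ⟨i, ?_⟩ _
    ⟨i + t, ?_⟩
  · simp [drumMate, drumPartner]
  · dsimp only
    rw [drumMate_add_natCast i A B ht, hpt]
    push_cast
    ring_nf

end DrumMate

section Parity

variable {N : ℕ} [NeZero N]

lemma val_add_natCast_mod_two (hN : N % 2 = 0) (x : ZMod N) (k : ℕ) :
    (x + k).val % 2 = (x.val + k) % 2 := by
  rw [ZMod.val_add, ZMod.val_natCast, Nat.mod_mod_of_dvd _ (Nat.dvd_of_mod_eq_zero hN),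
    Nat.add_mod, Nat.mod_mod_of_dvd _ (Nat.dvd_of_mod_eq_zero hN), ← Nat.add_mod]

lemma cEdge_colour_succ_ne (hN : N % 2 = 0) {c : Sym2 (ZMod N) → ℕ}
    (halt : ∀ j : ZMod N, c s(j, j + 1) = if j.val % 2 = 1 then 1 else 2) (j : ZMod N) :
    c s(j + 1, j + 1 + 1) ≠ c s(j, j + 1) := by
  have h := val_add_natCast_mod_two hN j 1
  rw [Nat.cast_one] at h
  rw [halt, halt]
  split_ifs <;> omega

lemma IsLegal.val_mod_two_eq {n : ℕ} {x y : ZMod (2 * n)} (h : IsLegal n s(x, y)) :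
    x.val % 2 = y.val % 2 := by
  obtain ⟨p, q, hpq, hpar⟩ := h
  rcases Sym2.eq_iff.mp hpq with ⟨rfl, rfl⟩ | ⟨rfl, rfl⟩
  exacts [hpar, hpar.symm]

end Parity

section TwoDrums

variable {N : ℕ} [NeZero N] (hN : N % 2 = 0) {G : SimpleGraph (ZMod N)} {c : Sym2 (ZMod N) → ℕ}
  (hC : ∀ j, G.Adj j (j + 1))
  (hmono : ∀ M, IsPerfectMatching G M → ∀ e ∈ M, ∀ e' ∈ M, c e = c e')
  (halt : ∀ j : ZMod N, c s(j, j + 1) = if j.val % 2 = 1 then 1 else 2)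
include hN hC hmono halt

lemma false_of_drum_of_farther_adj_succ {i a b : ZMod N} (ha : G.Adj i a) (ha' : G.Adj (i + 1) (a + 1))
    (hb' : G.Adj (i + 1) (b + 1)) (hpa : a.val % 2 = i.val % 2) (hpb : b.val % 2 = i.val % 2)
    (hlt : (a - i).val < (b - i).val) : False := by
  obtain ⟨A, hA, rfl⟩ := exists_eq_add_natCast i a
  obtain ⟨B, hB, rfl⟩ := exists_eq_add_natCast i b
  simp only [add_sub_cancel_left, ZMod.val_cast_of_lt hA, ZMod.val_cast_of_lt hB] at hlt
  rw [val_add_natCast_mod_two hN] at hpa hpb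
  have hA0 : A ≠ 0 := by
    rintro rfl
    simp at ha
  have hAe : A % 2 = 0 := by omega
  have hBe : B % 2 = 0 := by omega
  have hdrum := colour_eq_of_drumPartner_eq_succ G c hC hmono hAe hAe hN (by omega) le_rfl
    (by omega) ha ha' (t := A + 2) (by omega) (drumPartner_self_add_two hAe)
  have hswitch := colour_eq_of_drumPartner_eq_succ G c hC hmono hAe hBe hN (by omega) hlt.le
    (by omega) ha hb' (t := A + 1) (by omega) (drumPartner_add_one hAe (by omega) hlt)
  refine cEdge_colour_succ_ne hN halt (i + (A + 1 : ℕ)) ?_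
  rw [← hswitch, hdrum]
  push_cast
  ring_nf

lemma eq_of_drums_at {i a b : ZMod N} (ha : G.Adj i a) (ha' : G.Adj (i + 1) (a + 1))
    (hb : G.Adj i b) (hb' : G.Adj (i + 1) (b + 1))
    (hpa : a.val % 2 = i.val % 2) (hpb : b.val % 2 = i.val % 2) : a = b := by
  by_contra hab
  have hval : (a - i).val ≠ (b - i).val := fun h => hab (sub_left_inj.mp (ZMod.val_injective N h))
  rcases hval.lt_or_gt with hlt | hlt
  · exact false_of_drum_of_farther_adj_succ hN hC hmono halt ha ha' hb' hpa hpb hlt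
  · exact false_of_drum_of_farther_adj_succ hN hC hmono halt hb hb' ha' hpb hpa hlt

end TwoDrums

section Drums

variable {n : ℕ} {e₁ e₂ : Sym2 (ZMod (2 * n))} {i : ZMod (2 * n)}

lemma DrumCEdges.exists_drum_eq (hn : 1 < n) (h : DrumCEdges n e₁ e₂ s(i, i + 1)) :
    ∃ a, s(e₁, e₂) = s(s(i, a), s(i + 1, a + 1)) := by
  obtain ⟨u, v, hp, hf⟩ := h
  have h2 : (2 : ZMod (2 * n)) ≠ 0 := by
    have h2' : ((2 : ℕ) : ZMod (2 * n)) ≠ 0 := by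
      rw [ne_eq, ZMod.natCast_eq_zero_iff]
      exact fun h => absurd (Nat.le_of_dvd two_pos h) (by omega)
    exact_mod_cast h2'
  have hp' : s(e₁, e₂) = s(s(u, v), s(u + 1, v + 1)) := by
    rcases hp with ⟨rfl, rfl⟩ | ⟨rfl, rfl⟩
    exacts [rfl, Sym2.eq_swap]
  rcases hf with hf | hf <;> rcases Sym2.eq_iff.mp hf with ⟨rfl, -⟩ | ⟨h1, h1'⟩
  · exact ⟨v, hp'⟩
  · exact absurd (by linear_combination h1' - h1) h2
  · exact ⟨u, by rw [hp', Sym2.eq_swap (a := u), Sym2.eq_swap (a := u + 1)]⟩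
  · exact absurd (by linear_combination h1' - h1) h2

lemma adj_of_drum_eq {G : SimpleGraph (ZMod (2 * n))} {a : ZMod (2 * n)}
    (he₁ : e₁ ∈ G.edgeSet) (he₂ : e₂ ∈ G.edgeSet) (hd : IsDrum n e₁ e₂)
    (h : s(e₁, e₂) = s(s(i, a), s(i + 1, a + 1))) :
    G.Adj i a ∧ G.Adj (i + 1) (a + 1) ∧ a.val % 2 = i.val % 2 := by
  have hmem : ∀ e ∈ s(e₁, e₂), e ∈ G.edgeSet ∧ IsLegal n e := by
    intro e he
    rcases Sym2.mem_iff.mp he with rfl | rfl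
    exacts [⟨he₁, hd.1⟩, ⟨he₂, hd.2.1⟩]
  obtain ⟨hia, hlegal⟩ := hmem _ (by rw [h]; exact Sym2.mem_mk_left _ _)
  obtain ⟨hia', -⟩ := hmem _ (by rw [h]; exact Sym2.mem_mk_right _ _)
  exact ⟨hia, hia', hlegal.val_mod_two_eq.symm⟩

end Drums

theorem statement_5 (n : ℕ) (G : SimpleGraph (ZMod (2 * n)))
    (c : Sym2 (ZMod (2 * n)) → ℕ) (h : CondStar n G c) :
    ∀ i : ZMod (2 * n), ∀ e₁ e₂ f₁ f₂ : Sym2 (ZMod (2 * n)),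
      e₁ ∈ G.edgeSet → e₂ ∈ G.edgeSet → f₁ ∈ G.edgeSet → f₂ ∈ G.edgeSet →
      IsDrum n e₁ e₂ → IsDrum n f₁ f₂ →
      DrumCEdges n e₁ e₂ (s(i, i + 1)) → DrumCEdges n f₁ f₂ (s(i, i + 1)) →
      (e₁ = f₁ ∧ e₂ = f₂) ∨ (e₁ = f₂ ∧ e₂ = f₁) := by
  obtain ⟨hn, hC, -, ⟨-, hmono, -⟩, halt⟩ := h
  have : NeZero (2 * n) := ⟨by omega⟩
  intro i e₁ e₂ f₁ f₂ he₁ he₂ hf₁ hf₂ hde hdf hce hcf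
  obtain ⟨a, ha⟩ := hce.exists_drum_eq (by omega)
  obtain ⟨b, hb⟩ := hcf.exists_drum_eq (by omega)
  obtain ⟨hia, hia', hpa⟩ := adj_of_drum_eq he₁ he₂ hde ha
  obtain ⟨hib, hib', hpb⟩ := adj_of_drum_eq hf₁ hf₂ hdf hb
  have hab : a = b := eq_of_drums_at (by omega) hC hmono halt hia hia' hib hib' hpa hpb
  exact Sym2.eq_iff.mp (ha.trans (hab ▸ hb.symm))
end
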